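/- arXiv:2108.06138 — 9 statements merged into one kernel-verified Lean document; each statement's English description precedes it below -/
import Mathlib

section
/- If X ∼ Bernoulli(p) with 0 < p < 1 and mean μ = p, then the expectile skewness s₂(α) = (e_X(1−α) + e_X(α) − 2μ)/((1−2α)(e_X(1−α) − e_X(α))) equals 1 − 2p for every α ∈ (0, 1/2). -/
open MeasureTheory Set

/-- The first-order condition identifying the `α`-expectile of a distribution `P` on `ℝ`. -/
def IsExpectile (P : Measure ℝ) (α t : ℝ) : Prop :=
  α * ∫ x, max (x - t) 0 ∂P = (1 - α) * ∫ x, max (t - x) 0 ∂P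

lemma integrable_dirac'' {f : ℝ → ℝ} (hf : Measurable f) (a : ℝ) :
    Integrable f (Measure.dirac a) := by
  refine ⟨hf.aestronglyMeasurable, ?_⟩
  simp [HasFiniteIntegral, MeasureTheory.lintegral_dirac]

lemma integral_bern (p : ℝ) (hp0 : 0 ≤ p) (hp1 : p ≤ 1) (f : ℝ → ℝ) (hf : Measurable f) :
    ∫ x, f x ∂(ENNReal.ofReal p • Measure.dirac 1 + ENNReal.ofReal (1 - p) • Measure.dirac (0:ℝ))
      = p * f 1 + (1 - p) * f 0 := by
  rw [integral_add_measure ((integrable_dirac'' hf 1).smul_measure ENNReal.ofReal_ne_top)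
      ((integrable_dirac'' hf 0).smul_measure ENNReal.ofReal_ne_top),
    integral_smul_measure, integral_smul_measure, integral_dirac, integral_dirac,
    smul_eq_mul, smul_eq_mul, ENNReal.toReal_ofReal hp0, ENNReal.toReal_ofReal (by linarith)]

lemma expectile_val (p α t : ℝ) (hp0 : 0 < p) (hp1 : p < 1) (ha0 : 0 < α) (ha1 : α < 1)
    (h : α * (p * max (1 - t) 0 + (1 - p) * max (0 - t) 0)
        = (1 - α) * (p * max (t - 1) 0 + (1 - p) * max (t - 0) 0)) :
    t = α * p / (α * p + (1 - α) * (1 - p)) := by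
  have ht0 : 0 ≤ t := by
    by_contra hc
    push_neg at hc
    rw [max_eq_left (by linarith), max_eq_left (by linarith),
      max_eq_right (by linarith), max_eq_right (by linarith)] at h
    nlinarith
  have ht1 : t ≤ 1 := by
    by_contra hc
    push_neg at hc
    rw [max_eq_right (by linarith), max_eq_right (by linarith),
      max_eq_left (by linarith), max_eq_left (by linarith)] at h
    nlinarith
  rw [max_eq_left (by linarith), max_eq_right (by linarith),
    max_eq_right (by linarith), max_eq_left (by linarith)] at h
  have hD : α * p + (1 - α) * (1 - p) > 0 := by nlinarith
  rw [eq_div_iff (ne_of_gt hD)]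
  nlinarith

lemma skew_sub (p α d1 d2 : ℝ) (h1 : d1 ≠ 0) (h2 : d2 ≠ 0)
    (hd1 : d1 = α * p + (1 - α) * (1 - p)) (hd2 : d2 = (1 - α) * p + α * (1 - p)) :
    (1 - α) * p / d2 - α * p / d1 = p * (1 - p) * (1 - 2 * α) / (d1 * d2) := by
  rw [div_sub_div _ _ h2 h1, mul_comm d2 d1]
  congr 1
  rw [hd1, hd2]; ring

lemma skew_algebra (p α d1 d2 : ℝ) (h1 : d1 ≠ 0) (h2 : d2 ≠ 0)
    (hd1 : d1 = α * p + (1 - α) * (1 - p)) (hd2 : d2 = (1 - α) * p + α * (1 - p))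
    (hden : (1 - 2 * α) * ((1 - α) * p / d2 - α * p / d1) ≠ 0) :
    ((1 - α) * p / d2 + α * p / d1 - 2 * p) / ((1 - 2 * α) * ((1 - α) * p / d2 - α * p / d1))
      = 1 - 2 * p := by
  rw [div_eq_iff hden]
  field_simp
  subst hd1 hd2
  ring

/-- for `X ∼ Bernoulli(p)` with `0 < p < 1`, the normalized expectile skewness
`s₂(α) = (e_X(1−α) + e_X(α) − 2p)/((1−2α)(e_X(1−α) − e_X(α)))` equals `1 − 2p` for every
`α ∈ (0, 1/2)`. -/
theorem expectile_skewness_bernoulli (p : ℝ) (hp : p ∈ Ioo (0 : ℝ) 1)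
    (P : Measure ℝ)
    (hP : P = ENNReal.ofReal p • Measure.dirac 1 + ENNReal.ofReal (1 - p) • Measure.dirac 0)
    (α : ℝ) (hα : α ∈ Ioo (0 : ℝ) (1 / 2))
    (eLo eHi : ℝ) (heLo : IsExpectile P α eLo) (heHi : IsExpectile P (1 - α) eHi) :
    (eHi + eLo - 2 * p) / ((1 - 2 * α) * (eHi - eLo)) = 1 - 2 * p := by
  obtain ⟨hp0, hp1⟩ := hp
  obtain ⟨ha0, ha1⟩ := hα
  have hp0' : (0:ℝ) ≤ p := le_of_lt hp0
  have hp1' : p ≤ 1 := le_of_lt hp1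
  have hm1 : ∀ t : ℝ, Measurable fun x : ℝ => max (x - t) 0 :=
    fun t => (measurable_id.sub measurable_const).max measurable_const
  have hm2 : ∀ t : ℝ, Measurable fun x : ℝ => max (t - x) 0 :=
    fun t => (measurable_const.sub measurable_id).max measurable_const
  rw [IsExpectile, hP, integral_bern p hp0' hp1' _ (hm1 eLo),
    integral_bern p hp0' hp1' _ (hm2 eLo)] at heLo
  rw [IsExpectile, hP, integral_bern p hp0' hp1' _ (hm1 eHi),
    integral_bern p hp0' hp1' _ (hm2 eHi)] at heHi
  have hLo := expectile_val p α eLo hp0 hp1 ha0 (by linarith) heLo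
  have hHi := expectile_val p (1 - α) eHi hp0 hp1 (by linarith) (by linarith) heHi
  have hD1 : α * p + (1 - α) * (1 - p) > 0 := by nlinarith
  have hD2 : (1 - α) * p + α * (1 - p) > 0 := by nlinarith
  have hHi' : eHi = (1 - α) * p / ((1 - α) * p + α * (1 - p)) := by
    rw [hHi]; congr 1; ring
  have hsub := skew_sub p α _ _ (ne_of_gt hD1) (ne_of_gt hD2) rfl rfl
  have hdpos : (1 - α) * p / ((1 - α) * p + α * (1 - p))
      - α * p / (α * p + (1 - α) * (1 - p)) > 0 := by
    rw [hsub]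
    exact div_pos (mul_pos (mul_pos hp0 (by linarith)) (by linarith)) (by positivity)
  rw [hLo, hHi']
  exact skew_algebra p α _ _ (ne_of_gt hD1) (ne_of_gt hD2) rfl rfl
    (ne_of_gt (mul_pos (by linarith) hdpos))
end

section
/- Let X, Y be integrable random variables with standardized versions X̃ = (X−EX)/E|X−EX| and Ỹ = (Y−EY)/E|Y−EY|. If e_{X̃}(α) ≤ e_{Ỹ}(α) for all α ∈ (0,1), then s_{2,X}(α) ≤ s_{2,Y}(α) for all α ∈ (0,1/2). -/
open MeasureTheory Set

/-!
The identification function `t ↦ E[α (X - t)₊ - (1 - α) (t - X)₊]` is strictly decreasing, so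
expectiles are unique, commute with increasing affine maps, and lie below the mean exactly when
`α < 1/2`, since at the mean it equals `(α - 1/2) E|X - EX|`. Hence `s₂,X(α)` equals
`(ẽ(1-α) + ẽ(α)) / ((1 - 2α)(ẽ(1-α) - ẽ(α)))` for the standardized expectiles `ẽ`, which satisfy
`ẽ(α) < 0 < ẽ(1-α)`, and on that region this ratio is increasing in both `ẽ(α)` and `ẽ(1-α)`.
-/

def expectileIdent (α t x : ℝ) : ℝ := α * max (x - t) 0 - (1 - α) * max (t - x) 0

lemma expectileIdent_strictAnti {α : ℝ} (hα : α ∈ Ioo (0 : ℝ) 1) (x : ℝ) :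
    StrictAnti fun t => expectileIdent α t x := by
  intro t s hts
  have hup : max (x - s) 0 ≤ max (x - t) 0 := max_le_max (by linarith) le_rfl
  have hdown : max (t - x) 0 ≤ max (s - x) 0 := max_le_max (by linarith) le_rfl
  have hsum : (max (x - t) 0 - max (x - s) 0) + (max (s - x) 0 - max (t - x) 0) = s - t := by
    have ht := max_zero_sub_eq_self (x - t)
    have hs := max_zero_sub_eq_self (x - s)
    rw [neg_sub] at ht hs
    linarith
  show expectileIdent α s x < expectileIdent α t x
  unfold expectileIdent
  -- the two increments are nonnegative with sum `s - t`, so the total is `≥ α (1 - α) (s - t)`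
  nlinarith [mul_nonneg (sq_nonneg α) (sub_nonneg.2 hup),
    mul_nonneg (sq_nonneg (1 - α)) (sub_nonneg.2 hdown),
    mul_pos (mul_pos hα.1 (sub_pos.2 hα.2)) (sub_pos.2 hts)]

lemma expectileIdent_eq_abs (α m x : ℝ) :
    expectileIdent α m x = (α - 1 / 2) * |x - m| + (x - m) / 2 := by
  unfold expectileIdent
  rcases le_total x m with h | h
  · rw [abs_of_nonpos (sub_nonpos.2 h), max_eq_right (sub_nonpos.2 h),
      max_eq_left (sub_nonneg.2 h)]
    ring
  · rw [abs_of_nonneg (sub_nonneg.2 h), max_eq_left (sub_nonneg.2 h),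
      max_eq_right (sub_nonpos.2 h)]
    ring

lemma add_div_mul_sub_le {a b a' b' c : ℝ} (hc : 0 < c) (ha : 0 ≤ a) (hb : b ≤ 0)
    (hba : b < a) (hba' : b' < a') (haa' : a ≤ a') (hbb' : b ≤ b') :
    (a + b) / (c * (a - b)) ≤ (a' + b') / (c * (a' - b')) := by
  rw [div_le_div_iff₀ (mul_pos hc (sub_pos.2 hba)) (mul_pos hc (sub_pos.2 hba'))]
  have : a' * b ≤ a * b' := calc
    a' * b ≤ a * b := mul_le_mul_of_nonpos_right haa' hb
    _ ≤ a * b' := mul_le_mul_of_nonneg_left hbb' ha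
  nlinarith [mul_le_mul_of_nonneg_left this hc.le]

lemma add_sub_two_mul_div_affine (m d c a b : ℝ) (hd : d ≠ 0) :
    (m + d * a + (m + d * b) - 2 * m) / (c * (m + d * a - (m + d * b))) =
      (a + b) / (c * (a - b)) := by
  rw [show m + d * a + (m + d * b) - 2 * m = d * (a + b) by ring,
    show c * (m + d * a - (m + d * b)) = d * (c * (a - b)) by ring, mul_div_mul_left _ _ hd]

section

variable {P : Measure ℝ}

lemma integrable_expectileIdent [IsFiniteMeasure P] (hI : Integrable id P) (α t : ℝ) :
    Integrable (expectileIdent α t) P :=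
  (((hI.sub (integrable_const t)).pos_part).const_mul α).sub
    ((((integrable_const t).sub hI).pos_part).const_mul (1 - α))

lemma isExpectile_iff_integral_expectileIdent [IsFiniteMeasure P] (hI : Integrable id P)
    {α t : ℝ} : IsExpectile P α t ↔ ∫ x, expectileIdent α t x ∂P = 0 := by
  unfold IsExpectile expectileIdent
  rw [integral_sub, integral_const_mul, integral_const_mul, sub_eq_zero]
  · exact ((hI.sub (integrable_const t)).pos_part).const_mul α
  · exact (((integrable_const t).sub hI).pos_part).const_mul (1 - α)

lemma strictAnti_integral_expectileIdent [IsFiniteMeasure P] [NeZero P] (hI : Integrable id P)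
    {α : ℝ} (hα : α ∈ Ioo (0 : ℝ) 1) : StrictAnti fun t => ∫ x, expectileIdent α t x ∂P := by
  intro t s hts
  have hpos : ∀ x, 0 < expectileIdent α t x - expectileIdent α s x := fun x =>
    sub_pos.2 (expectileIdent_strictAnti hα x hts)
  have hint := (integral_pos_iff_support_of_nonneg (fun x => (hpos x).le)
    ((integrable_expectileIdent hI α t).sub (integrable_expectileIdent hI α s))).2
    (by simp [Function.support_eq_univ fun x => (hpos x).ne', NeZero.ne P])
  rw [integral_sub (integrable_expectileIdent hI α t) (integrable_expectileIdent hI α s)] at hint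
  exact sub_pos.1 hint

lemma IsExpectile.unique [IsFiniteMeasure P] [NeZero P] (hI : Integrable id P) {α t s : ℝ}
    (hα : α ∈ Ioo (0 : ℝ) 1) (ht : IsExpectile P α t) (hs : IsExpectile P α s) : t = s := by
  rw [isExpectile_iff_integral_expectileIdent hI] at ht hs
  exact (strictAnti_integral_expectileIdent hI hα).injective (ht.trans hs.symm)

lemma integral_expectileIdent_mean [IsProbabilityMeasure P] (hI : Integrable id P) (α : ℝ) :
    ∫ x, expectileIdent α (∫ y, y ∂P) x ∂P = (α - 1 / 2) * ∫ x, |x - ∫ y, y ∂P| ∂P := by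
  have hI' : Integrable (fun x : ℝ => x) P := hI
  have hc : Integrable (fun x => x - ∫ y, y ∂P) P := hI'.sub (integrable_const _)
  simp only [expectileIdent_eq_abs]
  rw [integral_add (hc.abs.const_mul _) (hc.div_const 2), integral_const_mul, integral_div,
    integral_sub hI' (integrable_const _)]
  simp

lemma IsExpectile.lt_integral [IsProbabilityMeasure P] (hI : Integrable id P) {α t : ℝ}
    (hα0 : 0 < α) (hα : α < 1 / 2) (hd : 0 < ∫ x, |x - ∫ y, y ∂P| ∂P)
    (h : IsExpectile P α t) : t < ∫ x, x ∂P := by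
  rw [isExpectile_iff_integral_expectileIdent hI] at h
  refine (strictAnti_integral_expectileIdent hI ⟨hα0, by linarith⟩).lt_iff_gt.1 ?_
  rw [h, integral_expectileIdent_mean hI]
  exact mul_neg_of_neg_of_pos (by linarith) hd

lemma IsExpectile.integral_lt [IsProbabilityMeasure P] (hI : Integrable id P) {α t : ℝ}
    (hα : 1 / 2 < α) (hα1 : α < 1) (hd : 0 < ∫ x, |x - ∫ y, y ∂P| ∂P)
    (h : IsExpectile P α t) : ∫ x, x ∂P < t := by
  rw [isExpectile_iff_integral_expectileIdent hI] at h
  refine (strictAnti_integral_expectileIdent hI ⟨by linarith, hα1⟩).lt_iff_gt.1 ?_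
  rw [h, integral_expectileIdent_mean hI]
  exact mul_pos (by linarith) hd

lemma IsExpectile.of_map_standardize {m d α s : ℝ} (hd : 0 < d)
    (h : IsExpectile (P.map fun x => (x - m) / d) α s) : IsExpectile P α (m + d * s) := by
  have hφ : AEMeasurable (fun x : ℝ => (x - m) / d) P := by fun_prop
  have hpos (x : ℝ) : max ((x - m) / d - s) 0 = max (x - (m + d * s)) 0 / d := by
    rw [← max_div_div_right hd.le, zero_div]
    congr 1
    field_simp
    ring
  have hneg (x : ℝ) : max (s - (x - m) / d) 0 = max (m + d * s - x) 0 / d := by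
    rw [← max_div_div_right hd.le, zero_div]
    congr 1
    field_simp
    ring
  unfold IsExpectile at h ⊢
  rw [integral_map hφ (by fun_prop), integral_map hφ (by fun_prop)] at h
  simp only [hpos, hneg, integral_div] at h
  field_simp at h
  linarith

lemma IsExpectile.neg_of_map_standardize [IsProbabilityMeasure P] (hI : Integrable id P)
    {α s : ℝ} (hα0 : 0 < α) (hα : α < 1 / 2) (hd : 0 < ∫ x, |x - ∫ y, y ∂P| ∂P)
    (h : IsExpectile (P.map fun x => (x - ∫ y, y ∂P) / ∫ x, |x - ∫ y, y ∂P| ∂P) α s) :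
    s < 0 :=
  neg_of_mul_neg_right (by linarith [(h.of_map_standardize hd).lt_integral hI hα0 hα hd]) hd.le

lemma IsExpectile.pos_of_map_standardize [IsProbabilityMeasure P] (hI : Integrable id P)
    {α s : ℝ} (hα : 1 / 2 < α) (hα1 : α < 1) (hd : 0 < ∫ x, |x - ∫ y, y ∂P| ∂P)
    (h : IsExpectile (P.map fun x => (x - ∫ y, y ∂P) / ∫ x, |x - ∫ y, y ∂P| ∂P) α s) :
    0 < s :=
  pos_of_mul_pos_right (by linarith [(h.of_map_standardize hd).integral_lt hI hα hα1 hd]) hd.le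

end

/-- if the expectiles of the standardized versions
`X̃ = (X−EX)/E|X−EX|` and `Ỹ = (Y−EY)/E|Y−EY|` are pointwise ordered on `(0,1)`, then the
normalized expectile skewness measures satisfy `s₂,X(α) ≤ s₂,Y(α)` for all `α ∈ (0,1/2)`. -/
theorem s2_monotone_of_standardized_expectile_order
    (P Q : Measure ℝ) [IsProbabilityMeasure P] [IsProbabilityMeasure Q]
    (hIP : Integrable id P) (hIQ : Integrable id Q)
    (mP mQ dP dQ : ℝ)
    (hmP : mP = ∫ x, x ∂P) (hmQ : mQ = ∫ x, x ∂Q)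
    (hdP : dP = ∫ x, |x - mP| ∂P) (hdQ : dQ = ∫ x, |x - mQ| ∂Q)
    (hdP0 : 0 < dP) (hdQ0 : 0 < dQ)
    (eP eQ ePt eQt : ℝ → ℝ)
    (heP : ∀ α ∈ Ioo (0 : ℝ) 1, IsExpectile P α (eP α))
    (heQ : ∀ α ∈ Ioo (0 : ℝ) 1, IsExpectile Q α (eQ α))
    (hePt : ∀ α ∈ Ioo (0 : ℝ) 1,
      IsExpectile (P.map fun x => (x - mP) / dP) α (ePt α))
    (heQt : ∀ α ∈ Ioo (0 : ℝ) 1,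
      IsExpectile (Q.map fun x => (x - mQ) / dQ) α (eQt α))
    (hord : ∀ α ∈ Ioo (0 : ℝ) 1, ePt α ≤ eQt α) :
    ∀ α ∈ Ioo (0 : ℝ) (1 / 2),
      (eP (1 - α) + eP α - 2 * mP) / ((1 - 2 * α) * (eP (1 - α) - eP α)) ≤
      (eQ (1 - α) + eQ α - 2 * mQ) / ((1 - 2 * α) * (eQ (1 - α) - eQ α)) := by
  rintro α ⟨hα0, hα⟩
  have hlo : α ∈ Ioo (0 : ℝ) 1 := ⟨hα0, by linarith⟩
  have hhi : 1 - α ∈ Ioo (0 : ℝ) 1 := ⟨by linarith, by linarith⟩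
  have hP (γ : ℝ) (hγ : γ ∈ Ioo (0 : ℝ) 1) : eP γ = mP + dP * ePt γ :=
    (heP γ hγ).unique hIP hγ ((hePt γ hγ).of_map_standardize hdP0)
  have hQ (γ : ℝ) (hγ : γ ∈ Ioo (0 : ℝ) 1) : eQ γ = mQ + dQ * eQt γ :=
    (heQ γ hγ).unique hIQ hγ ((heQt γ hγ).of_map_standardize hdQ0)
  subst hmP hmQ hdP hdQ
  have hPlo := (hePt α hlo).neg_of_map_standardize hIP hα0 hα hdP0
  have hPhi := (hePt _ hhi).pos_of_map_standardize hIP (by linarith) hhi.2 hdP0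
  have hQlo := (heQt α hlo).neg_of_map_standardize hIQ hα0 hα hdQ0
  have hQhi := (heQt _ hhi).pos_of_map_standardize hIQ (by linarith) hhi.2 hdQ0
  rw [hP α hlo, hP _ hhi, hQ α hlo, hQ _ hhi, add_sub_two_mul_div_affine _ _ _ _ _ hdP0.ne',
    add_sub_two_mul_div_affine _ _ _ _ _ hdQ0.ne']
  exact add_div_mul_sub_le (by linarith) hPhi.le hPlo.le (by linarith) (by linarith)
    (hord _ hhi) (hord α hlo)
end

section
/- Let X, Y be integrable random variables with strictly increasing continuous cdfs. Then X precedes Y in the weak expectile dispersive order (i.e., e_X(v) − e_X(u) ≤ e_Y(v) − e_Y(u) for all 0 < u ≤ 1/2 ≤ v < 1) if and only if X − EX precedes Y − EY in the convex order (i.e., E[φ(X−EX)] ≤ E[φ(Y−EY)] for all convex φ for which both expectations exist). -/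
/-!
Write `π(s) = E(X - EX - s)₊` for the centred stop-loss transform. For `β < 1/2` the defining
equation of the expectile says that `d = e_X(1 - β) - EX` solves `(1 - 2β) π(d) = β d`; as `π` is
antitone and nonnegative, this root is unique, lies in `[0, ∞)`, and every `s > 0` is the root for
`β = π(s) / (2π(s) + s)` (unless `π(s) = 0`). Comparing the roots for `X` and `Y` shows that the
upper half of the weak expectile dispersive order is equivalent to `π_X ≤ π_Y` on `(0, ∞)`; the
lower half is the same statement for the left tail, i.e. `π_X ≤ π_Y` on `(-∞, 0)`, and continuity
fills in `s = 0`.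

Stop-loss order together with equal means is the convex order. Hinges are convex; conversely a
convex `φ` is the pointwise limit of the maxima of its tangent lines at the points of finer and
finer grids, which are dominated by `|φ| + |tangent at 0|`. Such a maximum, taken over sorted
points, is the first tangent line plus one hinge `(ℓ_{i+1} - ℓ_i)₊` per further point, and each
hinge has an increasing affine argument, so its expectation is ordered by the stop-loss order.
-/

open MeasureTheory Set Filter Topology

noncomputable def tangentLine (φ : ℝ → ℝ) (p x : ℝ) : ℝ :=
  φ p + derivWithin φ (Ioi p) p * (x - p)

namespace ConvexOn

variable {φ : ℝ → ℝ}

lemma monotone_rightDeriv (hφ : ConvexOn ℝ univ φ) :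
    Monotone fun x => derivWithin φ (Ioi x) x := by
  simpa [monotoneOn_univ] using hφ.monotoneOn_rightDeriv

lemma tangentLine_le (hφ : ConvexOn ℝ univ φ) (p x : ℝ) : tangentLine φ p x ≤ φ x := by
  rcases lt_trichotomy p x with h | rfl | h
  · have := hφ.rightDeriv_le_slope_of_mem_interior (by simp) (mem_univ x) h
    rw [slope_def_field, le_div_iff₀ (sub_pos.2 h)] at this
    rw [tangentLine]
    linarith
  · simp [tangentLine]
  · have := (hφ.slope_le_leftDeriv_of_mem_interior (mem_univ x) (by simp) h).trans
      (hφ.leftDeriv_le_rightDeriv_of_mem_interior (by simp))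
    rw [slope_def_field, div_le_iff₀ (sub_pos.2 h)] at this
    rw [tangentLine]
    linarith

lemma le_tangentLine_add (hφ : ConvexOn ℝ univ φ) (p x : ℝ) :
    φ x ≤ tangentLine φ p x + (derivWithin φ (Ioi x) x - derivWithin φ (Ioi p) p) * (x - p) := by
  have := hφ.tangentLine_le x p
  simp only [tangentLine] at *
  linarith

lemma tangentLine_le_tangentLine_of_le_left (hφ : ConvexOn ℝ univ φ) {p q x : ℝ} (hpq : p ≤ q)
    (hxp : x ≤ p) : tangentLine φ q x ≤ tangentLine φ p x := by
  have hq := hφ.tangentLine_le q p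
  have hslope : (derivWithin φ (Ioi q) q - derivWithin φ (Ioi p) p) * (x - p) ≤ 0 :=
    mul_nonpos_of_nonneg_of_nonpos (sub_nonneg.2 (hφ.monotone_rightDeriv hpq)) (sub_nonpos.2 hxp)
  simp only [tangentLine] at *
  linarith

lemma tangentLine_le_tangentLine_of_le_right (hφ : ConvexOn ℝ univ φ) {p q x : ℝ} (hpq : p ≤ q)
    (hqx : q ≤ x) : tangentLine φ p x ≤ tangentLine φ q x := by
  have hp := hφ.tangentLine_le p q
  have hslope : 0 ≤ (derivWithin φ (Ioi q) q - derivWithin φ (Ioi p) p) * (x - q) :=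
    mul_nonneg (sub_nonneg.2 (hφ.monotone_rightDeriv hpq)) (sub_nonneg.2 hqx)
  simp only [tangentLine] at *
  linarith

end ConvexOn

noncomputable def tangentMax (φ : ℝ → ℝ) (p : ℕ → ℝ) : ℕ → ℝ → ℝ
  | 0, x => tangentLine φ (p 0) x
  | k + 1, x => max (tangentMax φ p k x) (tangentLine φ (p (k + 1)) x)

section TangentMax

variable {φ : ℝ → ℝ} {p : ℕ → ℝ}

lemma tangentLine_le_tangentMax {i k : ℕ} (hik : i ≤ k) (x : ℝ) :
    tangentLine φ (p i) x ≤ tangentMax φ p k x := by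
  induction k with
  | zero => rw [Nat.le_zero.1 hik]; rfl
  | succ k ih =>
    rcases hik.lt_or_eq with hik | rfl
    · exact (ih (Nat.lt_succ_iff.1 hik)).trans (le_max_left _ _)
    · exact le_max_right _ _

lemma ConvexOn.tangentMax_le (hφ : ConvexOn ℝ univ φ) (k : ℕ) (x : ℝ) :
    tangentMax φ p k x ≤ φ x := by
  induction k with
  | zero => exact hφ.tangentLine_le _ x
  | succ k ih => exact max_le ih (hφ.tangentLine_le _ x)

lemma ConvexOn.tangentMax_eq_of_le (hφ : ConvexOn ℝ univ φ) (hp : Monotone p) {k : ℕ} {x : ℝ}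
    (hx : p k ≤ x) : tangentMax φ p k x = tangentLine φ (p k) x := by
  induction k with
  | zero => rfl
  | succ k ih =>
    rw [tangentMax, ih ((hp k.le_succ).trans hx)]
    exact max_eq_right (hφ.tangentLine_le_tangentLine_of_le_right (hp k.le_succ) hx)

lemma ConvexOn.tangentMax_succ (hφ : ConvexOn ℝ univ φ) (hp : Monotone p) (k : ℕ) (x : ℝ) :
    tangentMax φ p (k + 1) x =
      tangentMax φ p k x + max (tangentLine φ (p (k + 1)) x - tangentLine φ (p k) x) 0 := by
  rw [tangentMax]
  rcases le_or_gt (tangentLine φ (p (k + 1)) x) (tangentLine φ (p k) x) with h | h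
  · rw [max_eq_left (h.trans (tangentLine_le_tangentMax le_rfl x)),
      max_eq_right (sub_nonpos.2 h), add_zero]
  · have hx : p k ≤ x := by
      by_contra! hx
      exact h.not_ge (hφ.tangentLine_le_tangentLine_of_le_left (hp k.le_succ) hx.le)
    rw [hφ.tangentMax_eq_of_le hp hx, max_eq_right h.le, max_eq_left (sub_nonneg.2 h.le)]
    ring

end TangentMax

noncomputable def tangentGrid (n i : ℕ) : ℝ := i / (n + 1) - n

lemma tangentGrid_monotone (n : ℕ) : Monotone (tangentGrid n) := fun i j hij => by
  unfold tangentGrid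
  gcongr

lemma tangentGrid_mul_succ (n : ℕ) : tangentGrid n (n * (n + 1)) = 0 := by
  unfold tangentGrid
  push_cast
  field_simp
  ring

lemma exists_tangentGrid_mem_Icc {n : ℕ} {x : ℝ} (hx : |x| ≤ n) :
    ∃ i ≤ 2 * n * (n + 1), tangentGrid n i ∈ Icc (x - 1 / (n + 1)) x := by
  have hn : (0 : ℝ) < n + 1 := by positivity
  obtain ⟨hxl, hxr⟩ := abs_le.1 hx
  refine ⟨⌊(x + n) * (n + 1)⌋₊, Nat.floor_le_of_le ?_, ?_, ?_⟩
  · push_cast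
    nlinarith
  · have hfloor := Nat.lt_floor_add_one ((x + n) * (n + 1))
    have hdiff : tangentGrid n ⌊(x + n) * (n + 1)⌋₊ - (x - 1 / (n + 1)) =
        (⌊(x + n) * (n + 1)⌋₊ + 1 - (x + n) * (n + 1)) / (n + 1) := by
      unfold tangentGrid
      field_simp
      ring
    have := div_nonneg (sub_nonneg.2 hfloor.le) hn.le
    linarith
  · have := Nat.floor_le (a := (x + n) * (n + 1)) (by nlinarith)
    rw [tangentGrid, sub_le_iff_le_add, div_le_iff₀ hn]
    linarith

-- The grid points `tangentGrid n i`, `i ≤ 2n(n + 1)`, sweep `[-n, n]` with mesh `1 / (n + 1)`.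
noncomputable def tangentApprox (φ : ℝ → ℝ) (n : ℕ) : ℝ → ℝ :=
  tangentMax φ (tangentGrid n) (2 * n * (n + 1))

section TangentApprox

variable {φ : ℝ → ℝ}

lemma tangentLine_zero_le_tangentApprox (n : ℕ) (x : ℝ) :
    tangentLine φ 0 x ≤ tangentApprox φ n x := by
  rw [← tangentGrid_mul_succ n]
  exact tangentLine_le_tangentMax (by nlinarith) x

lemma ConvexOn.tangentApprox_le (hφ : ConvexOn ℝ univ φ) (n : ℕ) (x : ℝ) :
    tangentApprox φ n x ≤ φ x :=
  hφ.tangentMax_le _ x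

lemma ConvexOn.tendsto_tangentApprox (hφ : ConvexOn ℝ univ φ) (x : ℝ) :
    Tendsto (fun n => tangentApprox φ n x) atTop (𝓝 (φ x)) := by
  set C := derivWithin φ (Ioi x) x - derivWithin φ (Ioi (x - 1)) (x - 1)
  have hlow : ∀ᶠ n : ℕ in atTop, φ x - C * (1 / (n + 1)) ≤ tangentApprox φ n x := by
    filter_upwards [eventually_ge_atTop ⌈|x|⌉₊] with n hn
    obtain ⟨i, hi, hpl, hpr⟩ :=
      exists_tangentGrid_mem_Icc ((Nat.le_ceil _).trans (by exact_mod_cast hn))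
    have hmesh : (1 : ℝ) / (n + 1) ≤ 1 := by
      rw [div_le_one (by positivity)]
      linarith [(n.cast_nonneg : (0 : ℝ) ≤ n)]
    have hslope : derivWithin φ (Ioi x) x - derivWithin φ (Ioi (tangentGrid n i)) (tangentGrid n i)
        ≤ C := sub_le_sub_left (hφ.monotone_rightDeriv (by linarith)) _
    have hgap := mul_le_mul hslope (show x - tangentGrid n i ≤ 1 / (n + 1) by linarith)
      (by linarith) ((sub_nonneg.2 (hφ.monotone_rightDeriv hpr)).trans hslope)
    have := hφ.le_tangentLine_add (tangentGrid n i) x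
    have := tangentLine_le_tangentMax (φ := φ) (p := tangentGrid n) hi x
    rw [tangentApprox]
    linarith
  have hlim : Tendsto (fun n : ℕ => φ x - C * (1 / ((n : ℝ) + 1))) atTop (𝓝 (φ x)) := by
    simpa using (tendsto_one_div_add_atTop_nhds_zero_nat.const_mul C).const_sub (φ x)
  exact tendsto_of_tendsto_of_tendsto_of_le_of_le' hlim tendsto_const_nhds hlow
    (Eventually.of_forall fun n => hφ.tangentApprox_le n x)

end TangentApprox

section StopLossOrder

variable {Ω Ω' : Type*} [MeasurableSpace Ω] [MeasurableSpace Ω'] {μ : Measure Ω} {ν : Measure Ω'}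
  {X : Ω → ℝ} {Y : Ω' → ℝ} {φ : ℝ → ℝ}

lemma integrable_tangentLine_comp [IsFiniteMeasure μ] (hX : Integrable X μ) (p : ℝ) :
    Integrable (fun ω => tangentLine φ p (X ω)) μ :=
  (integrable_const _).add ((hX.sub (integrable_const p)).const_mul _)

lemma integral_tangentLine_comp [IsProbabilityMeasure μ] (hX : Integrable X μ) (p : ℝ) :
    ∫ ω, tangentLine φ p (X ω) ∂μ = tangentLine φ p (∫ ω, X ω ∂μ) := by
  have hXp : Integrable (fun ω => X ω - p) μ := hX.sub (integrable_const p)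
  simp only [tangentLine]
  rw [integral_add (integrable_const _) (hXp.const_mul _), integral_const_mul,
    integral_sub hX (integrable_const p)]
  simp

lemma integrable_max_tangentLine_sub_comp [IsFiniteMeasure μ] (hX : Integrable X μ) (p q : ℝ) :
    Integrable (fun ω => max (tangentLine φ q (X ω) - tangentLine φ p (X ω)) 0) μ :=
  ((integrable_tangentLine_comp hX q).sub (integrable_tangentLine_comp hX p)).pos_part

lemma integrable_tangentMax_comp [IsFiniteMeasure μ] (hφ : ConvexOn ℝ univ φ) {p : ℕ → ℝ}
    (hp : Monotone p) (hX : Integrable X μ) (k : ℕ) :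
    Integrable (fun ω => tangentMax φ p k (X ω)) μ := by
  induction k with
  | zero => exact integrable_tangentLine_comp hX _
  | succ k ih =>
    simp only [hφ.tangentMax_succ hp]
    exact ih.add (integrable_max_tangentLine_sub_comp hX _ _)

variable [IsProbabilityMeasure μ] [IsProbabilityMeasure ν]

lemma integral_max_mul_add_le (hsl : ∀ t, ∫ ω, max (X ω - t) 0 ∂μ ≤ ∫ ω, max (Y ω - t) 0 ∂ν)
    {c : ℝ} (hc : 0 ≤ c) (d : ℝ) :
    ∫ ω, max (c * X ω + d) 0 ∂μ ≤ ∫ ω, max (c * Y ω + d) 0 ∂ν := by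
  rcases hc.eq_or_lt with rfl | hc
  · simp
  have hscale : ∀ y, max (c * y + d) 0 = c * max (y - (-d / c)) 0 := fun y => by
    rw [mul_max_of_nonneg _ _ hc.le, mul_zero]
    congr 1
    field_simp
    ring
  simp only [hscale, integral_const_mul]
  exact mul_le_mul_of_nonneg_left (hsl _) hc.le

lemma integral_max_tangentLine_sub_le (hφ : ConvexOn ℝ univ φ) {p q : ℝ} (hpq : p ≤ q)
    (hsl : ∀ t, ∫ ω, max (X ω - t) 0 ∂μ ≤ ∫ ω, max (Y ω - t) 0 ∂ν) :
    ∫ ω, max (tangentLine φ q (X ω) - tangentLine φ p (X ω)) 0 ∂μ ≤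
      ∫ ω, max (tangentLine φ q (Y ω) - tangentLine φ p (Y ω)) 0 ∂ν := by
  have haffine : ∀ x, tangentLine φ q x - tangentLine φ p x =
      (derivWithin φ (Ioi q) q - derivWithin φ (Ioi p) p) * x +
        (φ q - derivWithin φ (Ioi q) q * q - (φ p - derivWithin φ (Ioi p) p * p)) := fun x => by
    simp only [tangentLine]
    ring
  simp only [haffine]
  exact integral_max_mul_add_le hsl (sub_nonneg.2 (hφ.monotone_rightDeriv hpq)) _

lemma integral_tangentMax_comp_le (hφ : ConvexOn ℝ univ φ) {p : ℕ → ℝ} (hp : Monotone p)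
    (hX : Integrable X μ) (hY : Integrable Y ν) (hmean : ∫ ω, X ω ∂μ = ∫ ω, Y ω ∂ν)
    (hsl : ∀ t, ∫ ω, max (X ω - t) 0 ∂μ ≤ ∫ ω, max (Y ω - t) 0 ∂ν) (k : ℕ) :
    ∫ ω, tangentMax φ p k (X ω) ∂μ ≤ ∫ ω, tangentMax φ p k (Y ω) ∂ν := by
  induction k with
  | zero =>
    simp only [tangentMax]
    rw [integral_tangentLine_comp hX, integral_tangentLine_comp hY, hmean]
  | succ k ih =>
    simp only [hφ.tangentMax_succ hp]
    rw [integral_add (integrable_tangentMax_comp hφ hp hX k)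
        (integrable_max_tangentLine_sub_comp hX _ _),
      integral_add (integrable_tangentMax_comp hφ hp hY k)
        (integrable_max_tangentLine_sub_comp hY _ _)]
    exact add_le_add ih (integral_max_tangentLine_sub_le hφ (hp k.le_succ) hsl)

lemma tendsto_integral_tangentApprox_comp (hφ : ConvexOn ℝ univ φ) (hX : Integrable X μ)
    (hφX : Integrable (fun ω => φ (X ω)) μ) :
    Tendsto (fun n => ∫ ω, tangentApprox φ n (X ω) ∂μ) atTop (𝓝 (∫ ω, φ (X ω) ∂μ)) := by
  refine tendsto_integral_of_dominated_convergence (fun ω => |φ (X ω)| + |tangentLine φ 0 (X ω)|)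
    (fun n => (integrable_tangentMax_comp hφ (tangentGrid_monotone n) hX _).aestronglyMeasurable)
    (hφX.abs.add (integrable_tangentLine_comp hX 0).abs) (fun n => ae_of_all _ fun ω => ?_)
    (ae_of_all _ fun ω => hφ.tendsto_tangentApprox (X ω))
  have hup := hφ.tangentApprox_le n (X ω)
  have hlow := tangentLine_zero_le_tangentApprox (φ := φ) n (X ω)
  rw [Real.norm_eq_abs, abs_le]
  constructor <;> linarith [le_abs_self (φ (X ω)), neg_abs_le (tangentLine φ 0 (X ω)),
    abs_nonneg (φ (X ω)), abs_nonneg (tangentLine φ 0 (X ω))]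

theorem integral_comp_le_of_stopLoss_le (hφ : ConvexOn ℝ univ φ) (hX : Integrable X μ)
    (hY : Integrable Y ν) (hmean : ∫ ω, X ω ∂μ = ∫ ω, Y ω ∂ν)
    (hsl : ∀ t, ∫ ω, max (X ω - t) 0 ∂μ ≤ ∫ ω, max (Y ω - t) 0 ∂ν)
    (hφX : Integrable (fun ω => φ (X ω)) μ) (hφY : Integrable (fun ω => φ (Y ω)) ν) :
    ∫ ω, φ (X ω) ∂μ ≤ ∫ ω, φ (Y ω) ∂ν :=
  le_of_tendsto_of_tendsto' (tendsto_integral_tangentApprox_comp hφ hX hφX)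
    (tendsto_integral_tangentApprox_comp hφ hY hφY)
    fun n => integral_tangentMax_comp_le hφ (tangentGrid_monotone n) hX hY hmean hsl _

lemma convexOn_max_sub_const (t : ℝ) : ConvexOn ℝ univ fun x : ℝ => max (x - t) 0 :=
  ((convexOn_id convex_univ).add_const (-t)).sup (convexOn_const 0 convex_univ) |>.congr
    fun x _ => by simp [sub_eq_add_neg]

theorem convexOrder_iff_stopLoss_le (hX : Integrable X μ) (hY : Integrable Y ν)
    (hmean : ∫ ω, X ω ∂μ = ∫ ω, Y ω ∂ν) :
    (∀ φ : ℝ → ℝ, ConvexOn ℝ univ φ → Integrable (fun ω => φ (X ω)) μ →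
        Integrable (fun ω => φ (Y ω)) ν → ∫ ω, φ (X ω) ∂μ ≤ ∫ ω, φ (Y ω) ∂ν) ↔
      ∀ t, ∫ ω, max (X ω - t) 0 ∂μ ≤ ∫ ω, max (Y ω - t) 0 ∂ν :=
  ⟨fun h t => h _ (convexOn_max_sub_const t) (hX.sub (integrable_const t)).pos_part
      (hY.sub (integrable_const t)).pos_part,
    fun hsl _ hφ hφX hφY => integral_comp_le_of_stopLoss_le hφ hX hY hmean hsl hφX hφY⟩

end StopLossOrder

lemma le_iff_of_mul_eq_mul {f g : ℝ → ℝ} (hg : Antitone g) {κ c a b : ℝ} (hκ : 0 < κ)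
    (hc : 0 < c) (ha : κ * f a = c * a) (hb : κ * g b = c * b) : a ≤ b ↔ f a ≤ g a := by
  constructor
  · intro hab
    have : κ * f a ≤ κ * g a :=
      calc κ * f a = c * a := ha
        _ ≤ c * b := mul_le_mul_of_nonneg_left hab hc.le
        _ = κ * g b := hb.symm
        _ ≤ κ * g a := mul_le_mul_of_nonneg_left (hg hab) hκ.le
    exact le_of_mul_le_mul_left this hκ
  · intro hfg
    by_contra! hba
    have : c * a ≤ c * b := by
      rw [← ha, ← hb]
      exact mul_le_mul_of_nonneg_left (hfg.trans (hg hba.le)) hκ.le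
    exact (mul_lt_mul_of_pos_left hba hc).not_ge this

-- `dF β` is the root of `(1 - 2β) f d = β d`; for `f` the centred stop-loss transform of a
-- distribution, it is the centred expectile at level `1 - β`.
theorem forall_le_iff_forall_pos_le {f g dF dG : ℝ → ℝ} (hf : Antitone f) (hg : Antitone g)
    (hf0 : ∀ s, 0 ≤ f s) (hg0 : ∀ s, 0 ≤ g s)
    (hdF : ∀ β ∈ Ioo (0 : ℝ) (1 / 2), (1 - 2 * β) * f (dF β) = β * dF β)
    (hdG : ∀ β ∈ Ioo (0 : ℝ) (1 / 2), (1 - 2 * β) * g (dG β) = β * dG β) :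
    (∀ β ∈ Ioo (0 : ℝ) (1 / 2), dF β ≤ dG β) ↔ ∀ s, 0 < s → f s ≤ g s := by
  constructor
  · intro h s hs
    rcases (hf0 s).eq_or_lt with hfs | hfs
    · exact hfs ▸ hg0 s
    set β := f s / (2 * f s + s)
    have hβ : β ∈ Ioo (0 : ℝ) (1 / 2) := ⟨by positivity, by
      rw [div_lt_iff₀ (by positivity)]
      linarith⟩
    have hβs : (1 - 2 * β) * f s = β * s := by
      simp only [β]
      field_simp
      ring
    have hκ : 0 < 1 - 2 * β := by linarith [hβ.2]
    have hroot : dF β = s := le_antisymm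
      ((le_iff_of_mul_eq_mul hf hκ hβ.1 (hdF β hβ) hβs).2 le_rfl)
      ((le_iff_of_mul_eq_mul hf hκ hβ.1 hβs (hdF β hβ)).2 le_rfl)
    rw [← hroot]
    exact (le_iff_of_mul_eq_mul hg hκ hβ.1 (hdF β hβ) (hdG β hβ)).1 (h β hβ)
  · intro h β hβ
    have hκ : 0 < 1 - 2 * β := by linarith [hβ.2]
    have hroot_nonneg {k d : ℝ → ℝ} (hk0 : ∀ s, 0 ≤ k s)
        (hd : (1 - 2 * β) * k (d β) = β * d β) : 0 ≤ d β :=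
      nonneg_of_mul_nonneg_right (hd ▸ mul_nonneg hκ.le (hk0 _)) hβ.1
    rcases (hroot_nonneg hf0 (hdF β hβ)).eq_or_lt with h0 | hpos
    · exact h0 ▸ hroot_nonneg hg0 (hdG β hβ)
    · exact (le_iff_of_mul_eq_mul hg hκ hβ.1 (hdF β hβ) (hdG β hβ)).2 (h _ hpos)

lemma dispersive_iff_upper_and_lower {eP eQ : ℝ → ℝ} {mP mQ : ℝ} (hP : eP (1 / 2) = mP)
    (hQ : eQ (1 / 2) = mQ) :
    (∀ u v : ℝ, 0 < u → u ≤ 1 / 2 → 1 / 2 ≤ v → v < 1 → eP v - eP u ≤ eQ v - eQ u) ↔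
      (∀ β ∈ Ioo (0 : ℝ) (1 / 2), eP (1 - β) - mP ≤ eQ (1 - β) - mQ) ∧
        ∀ β ∈ Ioo (0 : ℝ) (1 / 2), mP - eP β ≤ mQ - eQ β := by
  constructor
  · intro h
    refine ⟨fun β hβ => ?_, fun β hβ => ?_⟩
    · have := h (1 / 2) (1 - β) (by norm_num) le_rfl (by linarith [hβ.2]) (by linarith [hβ.1])
      rwa [hP, hQ] at this
    · have := h β (1 / 2) hβ.1 hβ.2.le le_rfl (by norm_num)
      rw [hP, hQ] at this
      linarith
  · rintro ⟨hupper, hlower⟩ u v hu hu' hv hv'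
    have hv : eP v - mP ≤ eQ v - mQ := by
      rcases hv.eq_or_lt with rfl | hv
      · rw [hP, hQ, sub_self, sub_self]
      · simpa using hupper (1 - v) ⟨by linarith, by linarith⟩
    have hu : mP - eP u ≤ mQ - eQ u := by
      rcases hu'.eq_or_lt with rfl | hu'
      · rw [hP, hQ, sub_self, sub_self]
      · exact hlower u ⟨hu, hu'⟩
    linarith

noncomputable def stopLoss (P : Measure ℝ) (t : ℝ) : ℝ := ∫ x, max (x - t) 0 ∂P

noncomputable def lowerStopLoss (P : Measure ℝ) (t : ℝ) : ℝ := ∫ x, max (t - x) 0 ∂P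

section OneMeasure

variable {P : Measure ℝ}

lemma stopLoss_nonneg (t : ℝ) : 0 ≤ stopLoss P t :=
  integral_nonneg fun _ => le_max_right _ _

lemma lowerStopLoss_nonneg (t : ℝ) : 0 ≤ lowerStopLoss P t :=
  integral_nonneg fun _ => le_max_right _ _

lemma stopLoss_antitone [IsFiniteMeasure P] (hP : Integrable id P) : Antitone (stopLoss P) :=
  fun _ _ h => integral_mono (hP.sub (integrable_const _)).pos_part
    (hP.sub (integrable_const _)).pos_part fun _ => max_le_max (by linarith) le_rfl

lemma lowerStopLoss_monotone [IsFiniteMeasure P] (hP : Integrable id P) :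
    Monotone (lowerStopLoss P) :=
  fun _ _ h => integral_mono ((integrable_const _).sub hP).pos_part
    ((integrable_const _).sub hP).pos_part fun _ => max_le_max (by linarith) le_rfl

variable [IsProbabilityMeasure P]

lemma stopLoss_sub_lowerStopLoss (hP : Integrable id P) (t : ℝ) :
    stopLoss P t - lowerStopLoss P t = ∫ x, x ∂P - t := by
  have hup : Integrable (fun x => max (x - t) 0) P := (hP.sub (integrable_const t)).pos_part
  have hlow : Integrable (fun x => max (t - x) 0) P := ((integrable_const t).sub hP).pos_part
  have hsplit : ∀ x : ℝ, max (x - t) 0 - max (t - x) 0 = x - t := fun x => by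
    rw [← neg_sub x t, max_zero_sub_max_neg_zero_eq_self]
  rw [stopLoss, lowerStopLoss, ← integral_sub hup hlow]
  simp only [hsplit]
  rw [integral_sub (f := fun x => x) hP (integrable_const t)]
  simp

lemma lowerStopLoss_eq_stopLoss_sub (hP : Integrable id P) (t : ℝ) :
    lowerStopLoss P t = stopLoss P t - (∫ x, x ∂P - t) := by
  linarith [stopLoss_sub_lowerStopLoss hP t]

lemma IsExpectile.upper (hP : Integrable id P) {β t : ℝ} (h : IsExpectile P (1 - β) t) :
    (1 - 2 * β) * stopLoss P t = β * (t - ∫ x, x ∂P) := by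
  have := stopLoss_sub_lowerStopLoss hP t
  unfold IsExpectile at h
  rw [stopLoss, lowerStopLoss] at *
  linear_combination h - β * this

lemma IsExpectile.lower (hP : Integrable id P) {β t : ℝ} (h : IsExpectile P β t) :
    (1 - 2 * β) * lowerStopLoss P t = β * (∫ x, x ∂P - t) := by
  have := stopLoss_sub_lowerStopLoss hP t
  unfold IsExpectile at h
  rw [stopLoss, lowerStopLoss] at *
  linear_combination β * this - h

lemma IsExpectile.eq_integral_of_half (hP : Integrable id P) {t : ℝ}
    (h : IsExpectile P (1 / 2) t) : t = ∫ x, x ∂P := by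
  have := IsExpectile.upper hP (β := 1 / 2) (by norm_num; exact h)
  linarith

end OneMeasure

section TwoMeasures

variable {P Q : Measure ℝ} [IsProbabilityMeasure P] [IsProbabilityMeasure Q]

lemma forall_stopLoss_le_iff (hP : Integrable id P) (hQ : Integrable id Q) :
    ((∀ s, 0 < s → stopLoss P (∫ x, x ∂P + s) ≤ stopLoss Q (∫ x, x ∂Q + s)) ∧
        ∀ s, 0 < s → lowerStopLoss P (∫ x, x ∂P - s) ≤ lowerStopLoss Q (∫ x, x ∂Q - s)) ↔
      ∀ s, stopLoss P (∫ x, x ∂P + s) ≤ stopLoss Q (∫ x, x ∂Q + s) := by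
  simp only [lowerStopLoss_eq_stopLoss_sub hP, lowerStopLoss_eq_stopLoss_sub hQ, sub_sub_cancel,
    sub_le_sub_iff_right]
  constructor
  · rintro ⟨hpos, hneg⟩ s
    rcases lt_trichotomy s 0 with hs | rfl | hs
    · simpa [sub_eq_add_neg] using hneg (-s) (neg_pos.2 hs)
    · refine le_of_forall_pos_le_add fun ε hε => ?_
      have hPε := lowerStopLoss_monotone hP (le_add_of_nonneg_right hε.le : ∫ x, x ∂P ≤ _)
      have hQε := stopLoss_antitone hQ (le_add_of_nonneg_right hε.le : ∫ x, x ∂Q ≤ _)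
      rw [lowerStopLoss_eq_stopLoss_sub hP, lowerStopLoss_eq_stopLoss_sub hP, sub_self] at hPε
      rw [add_zero, add_zero]
      linarith [hpos ε hε]
    · exact hpos s hs
  · exact fun h => ⟨fun s _ => h s, fun s _ => by simpa [sub_eq_add_neg] using h (-s)⟩

lemma forall_expectile_upper_le_iff (hP : Integrable id P) (hQ : Integrable id Q)
    {eP eQ : ℝ → ℝ} (heP : ∀ α ∈ Ioo (0 : ℝ) 1, IsExpectile P α (eP α))
    (heQ : ∀ α ∈ Ioo (0 : ℝ) 1, IsExpectile Q α (eQ α)) :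
    (∀ β ∈ Ioo (0 : ℝ) (1 / 2), eP (1 - β) - ∫ x, x ∂P ≤ eQ (1 - β) - ∫ x, x ∂Q) ↔
      ∀ s, 0 < s → stopLoss P (∫ x, x ∂P + s) ≤ stopLoss Q (∫ x, x ∂Q + s) := by
  have hroot {μ : Measure ℝ} [IsProbabilityMeasure μ] (hμ : Integrable id μ) {e : ℝ → ℝ}
      (he : ∀ α ∈ Ioo (0 : ℝ) 1, IsExpectile μ α (e α)) (β : ℝ) (hβ : β ∈ Ioo (0 : ℝ) (1 / 2)) :
      (1 - 2 * β) * stopLoss μ (∫ x, x ∂μ + (e (1 - β) - ∫ x, x ∂μ)) =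
        β * (e (1 - β) - ∫ x, x ∂μ) := by
    rw [add_sub_cancel]
    exact (he _ ⟨by linarith [hβ.2], by linarith [hβ.1]⟩).upper hμ
  exact forall_le_iff_forall_pos_le (fun _ _ h => stopLoss_antitone hP (by linarith))
    (fun _ _ h => stopLoss_antitone hQ (by linarith)) (fun _ => stopLoss_nonneg _)
    (fun _ => stopLoss_nonneg _) (hroot hP heP) (hroot hQ heQ)

lemma forall_expectile_lower_le_iff (hP : Integrable id P) (hQ : Integrable id Q)
    {eP eQ : ℝ → ℝ} (heP : ∀ α ∈ Ioo (0 : ℝ) 1, IsExpectile P α (eP α))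
    (heQ : ∀ α ∈ Ioo (0 : ℝ) 1, IsExpectile Q α (eQ α)) :
    (∀ β ∈ Ioo (0 : ℝ) (1 / 2), ∫ x, x ∂P - eP β ≤ ∫ x, x ∂Q - eQ β) ↔
      ∀ s, 0 < s → lowerStopLoss P (∫ x, x ∂P - s) ≤ lowerStopLoss Q (∫ x, x ∂Q - s) := by
  have hroot {μ : Measure ℝ} [IsProbabilityMeasure μ] (hμ : Integrable id μ) {e : ℝ → ℝ}
      (he : ∀ α ∈ Ioo (0 : ℝ) 1, IsExpectile μ α (e α)) (β : ℝ) (hβ : β ∈ Ioo (0 : ℝ) (1 / 2)) :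
      (1 - 2 * β) * lowerStopLoss μ (∫ x, x ∂μ - (∫ x, x ∂μ - e β)) =
        β * (∫ x, x ∂μ - e β) := by
    rw [sub_sub_cancel]
    exact (he _ ⟨hβ.1, by linarith [hβ.2]⟩).lower hμ
  exact forall_le_iff_forall_pos_le (fun _ _ h => lowerStopLoss_monotone hP (by linarith))
    (fun _ _ h => lowerStopLoss_monotone hQ (by linarith)) (fun _ => lowerStopLoss_nonneg _)
    (fun _ => lowerStopLoss_nonneg _) (hroot hP heP) (hroot hQ heQ)

theorem expectileDispersive_iff_stopLoss_le (hP : Integrable id P) (hQ : Integrable id Q)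
    {eP eQ : ℝ → ℝ} (heP : ∀ α ∈ Ioo (0 : ℝ) 1, IsExpectile P α (eP α))
    (heQ : ∀ α ∈ Ioo (0 : ℝ) 1, IsExpectile Q α (eQ α)) :
    (∀ u v : ℝ, 0 < u → u ≤ 1 / 2 → 1 / 2 ≤ v → v < 1 → eP v - eP u ≤ eQ v - eQ u) ↔
      ∀ s, stopLoss P (∫ x, x ∂P + s) ≤ stopLoss Q (∫ x, x ∂Q + s) := by
  have hhalf : (1 / 2 : ℝ) ∈ Ioo 0 1 := by norm_num
  rw [dispersive_iff_upper_and_lower ((heP _ hhalf).eq_integral_of_half hP)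
      ((heQ _ hhalf).eq_integral_of_half hQ),
    forall_expectile_upper_le_iff hP hQ heP heQ, forall_expectile_lower_le_iff hP hQ heP heQ,
    forall_stopLoss_le_iff hP hQ]

end TwoMeasures

theorem weak_expectile_dispersive_iff_dilation_general
    (P Q : Measure ℝ) [IsProbabilityMeasure P] [IsProbabilityMeasure Q]
    (hIP : Integrable id P) (hIQ : Integrable id Q)
    (mP mQ : ℝ) (hmP : mP = ∫ x, x ∂P) (hmQ : mQ = ∫ x, x ∂Q)
    (eP eQ : ℝ → ℝ)
    (heP : ∀ α ∈ Ioo (0 : ℝ) 1, IsExpectile P α (eP α))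
    (heQ : ∀ α ∈ Ioo (0 : ℝ) 1, IsExpectile Q α (eQ α)) :
    (∀ u v : ℝ, 0 < u → u ≤ 1 / 2 → 1 / 2 ≤ v → v < 1 →
        eP v - eP u ≤ eQ v - eQ u) ↔
    (∀ φ : ℝ → ℝ, ConvexOn ℝ univ φ →
        Integrable (fun x => φ (x - mP)) P → Integrable (fun x => φ (x - mQ)) Q →
        ∫ x, φ (x - mP) ∂P ≤ ∫ x, φ (x - mQ) ∂Q) := by
  have hcentred {μ : Measure ℝ} [IsProbabilityMeasure μ] (hμ : Integrable id μ) :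
      ∫ x, (x - ∫ y, y ∂μ) ∂μ = 0 := by
    rw [integral_sub (f := fun x => x) hμ (integrable_const _)]
    simp
  subst hmP hmQ
  have hX : Integrable (fun x => x - ∫ y, y ∂P) P := hIP.sub (integrable_const _)
  have hY : Integrable (fun x => x - ∫ y, y ∂Q) Q := hIQ.sub (integrable_const _)
  rw [expectileDispersive_iff_stopLoss_le hIP hIQ heP heQ,
    convexOrder_iff_stopLoss_le hX hY ((hcentred hIP).trans (hcentred hIQ).symm)]
  simp only [stopLoss, sub_sub]

/-- for integrable random variables with strictly increasing continuous cdfs,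
the weak expectile dispersive order (`e_X(v) − e_X(u) ≤ e_Y(v) − e_Y(u)` for all
`0 < u ≤ 1/2 ≤ v < 1`) holds if and only if `X − EX ≤_cx Y − EY` (the dilation order). -/
theorem weak_expectile_dispersive_iff_dilation
    (P Q : Measure ℝ) [IsProbabilityMeasure P] [IsProbabilityMeasure Q]
    (hIP : Integrable id P) (hIQ : Integrable id Q)
    (hcontP : Continuous fun t : ℝ => (P (Iic t)).toReal)
    (hmonoP : StrictMono fun t : ℝ => (P (Iic t)).toReal)
    (hcontQ : Continuous fun t : ℝ => (Q (Iic t)).toReal)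
    (hmonoQ : StrictMono fun t : ℝ => (Q (Iic t)).toReal)
    (mP mQ : ℝ) (hmP : mP = ∫ x, x ∂P) (hmQ : mQ = ∫ x, x ∂Q)
    (eP eQ : ℝ → ℝ)
    (heP : ∀ α ∈ Ioo (0 : ℝ) 1, IsExpectile P α (eP α))
    (heQ : ∀ α ∈ Ioo (0 : ℝ) 1, IsExpectile Q α (eQ α)) :
    (∀ u v : ℝ, 0 < u → u ≤ 1 / 2 → 1 / 2 ≤ v → v < 1 →
        eP v - eP u ≤ eQ v - eQ u) ↔
    (∀ φ : ℝ → ℝ, ConvexOn ℝ univ φ →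
        Integrable (fun x => φ (x - mP)) P → Integrable (fun x => φ (x - mQ)) Q →
        ∫ x, φ (x - mP) ∂P ≤ ∫ x, φ (x - mQ) ∂Q) :=
  weak_expectile_dispersive_iff_dilation_general P Q hIP hIQ mP mQ hmP hmQ eP eQ heP heQ
end

section
/- Let X, Y be integrable random variables, and suppose X ≤_disp Y, i.e., F_X^{-1}(v) − F_X^{-1}(u) ≤ F_Y^{-1}(v) − F_Y^{-1}(u) for all 0 < u < v < 1. Then X − EX ≤_cx Y − EY. -/
open MeasureTheory Set

/-- The (left-continuous generalized) quantile function of a distribution `P` on `ℝ`. -/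
noncomputable def quantileFn (P : Measure ℝ) (p : ℝ) : ℝ :=
  sInf {x : ℝ | p ≤ (P (Iic x)).toReal}

/-!
Couple the two laws comonotonically: under Lebesgue measure on `(0, 1)` the quantile functions
have laws `P` and `Q`. With `X = F_P⁻¹ - m_P` and `Y = F_Q⁻¹ - m_Q`, the dispersive order says that
`Y - X` is nondecreasing; having mean zero, it changes sign at some `c`. As `X` is nondecreasing
too, `Y u` always lies on the far side of `X u` as seen from `t = X c`, so the secant slope of the
convex `φ` between `X u` and `Y u` compares with its right derivative `s` at `t` the right way:
`φ (Y u) ≥ φ (X u) + s (Y u - X u)`. Integrating, the linear term vanishes.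
-/

namespace ConvexOn

variable {φ : ℝ → ℝ}

lemma rightDeriv_mul_sub_le (hφ : ConvexOn ℝ univ φ) {t x y : ℝ}
    (hxy : 0 ≤ (x - t) * (y - x)) :
    derivWithin φ (Ioi t) t * (y - x) ≤ φ y - φ x := by
  have hmono := hφ.monotoneOn_rightDeriv
  rw [interior_univ] at hmono
  rcases lt_trichotomy x y with h | rfl | h
  · have htx : t ≤ x := by nlinarith
    have hslope : derivWithin φ (Ioi t) t ≤ slope φ x y :=
      (hmono trivial trivial htx).trans
        (hφ.rightDeriv_le_slope_of_mem_interior (by simp) trivial h)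
    rwa [slope_def_field, le_div_iff₀ (sub_pos.2 h)] at hslope
  · simp
  · have hxt : x ≤ t := by nlinarith
    have hslope : slope φ y x ≤ derivWithin φ (Ioi t) t :=
      (hφ.slope_le_leftDeriv_of_mem_interior trivial (by simp) h).trans
        ((hφ.leftDeriv_le_rightDeriv_of_mem_interior (by simp)).trans (hmono trivial trivial hxt))
    rw [slope_def_field, div_le_iff₀ (sub_pos.2 h)] at hslope
    linarith

lemma integral_comp_le_of_ae_mul_sub_nonneg {Ω : Type*} [MeasurableSpace Ω]
    {μ : Measure Ω} (hφ : ConvexOn ℝ univ φ) {X Y : Ω → ℝ}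
    (hX : Integrable X μ) (hY : Integrable Y μ) (hmean : ∫ ω, X ω ∂μ = ∫ ω, Y ω ∂μ)
    (hφX : Integrable (fun ω => φ (X ω)) μ) (hφY : Integrable (fun ω => φ (Y ω)) μ) {t : ℝ}
    (hcross : ∀ᵐ ω ∂μ, 0 ≤ (X ω - t) * (Y ω - X ω)) :
    ∫ ω, φ (X ω) ∂μ ≤ ∫ ω, φ (Y ω) ∂μ := by
  set s := derivWithin φ (Ioi t) t
  have hlin : Integrable (fun ω => s * (Y ω - X ω)) μ := (hY.sub hX).const_mul s
  have hlin0 : ∫ ω, s * (Y ω - X ω) ∂μ = 0 := by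
    rw [integral_const_mul, integral_sub hY hX, hmean, sub_self, mul_zero]
  calc ∫ ω, φ (X ω) ∂μ = ∫ ω, φ (X ω) + s * (Y ω - X ω) ∂μ := by
        rw [integral_add hφX hlin, hlin0, add_zero]
    _ ≤ ∫ ω, φ (Y ω) ∂μ := integral_mono_ae (hφX.add hlin) hφY <|
        hcross.mono fun ω h => by linarith [hφ.rightDeriv_mul_sub_le h]

end ConvexOn

lemma MonotoneOn.exists_mul_sub_nonneg_of_setIntegral_eq_zero {μ : Measure ℝ} {s : Set ℝ}
    {d : ℝ → ℝ} (hd : MonotoneOn d s) (hs : s.OrdConnected) (hμs : μ s ≠ 0) (hμs' : μ s ≠ ⊤)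
    (hint : IntegrableOn d s μ) (h0 : ∫ u in s, d u ∂μ = 0) :
    ∃ c ∈ s, ∀ u ∈ s, 0 ≤ (u - c) * d u := by
  have havg : ⨍ u in s, d u ∂μ = 0 := by rw [setAverage_eq, h0, smul_zero]
  obtain ⟨a, has, ha⟩ := exists_le_setAverage hμs hμs' hint
  obtain ⟨b, hbs, hb⟩ := exists_setAverage_le hμs hμs' hint
  rw [havg] at ha hb
  -- capping at `b` keeps `T` bounded even if `d` vanishes beyond `b`
  set T := {u ∈ s | u ≤ b ∧ d u ≤ 0}
  have hmin : min a b ∈ T := by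
    rcases le_total a b with hab | hba
    · simpa [T, hab] using ⟨has, ha⟩
    · simpa [T, hba] using ⟨hbs, (hd hbs has hba).trans ha⟩
  have hbdd : BddAbove T := ⟨b, fun w hw => hw.2.1⟩
  have hcb : sSup T ≤ b := csSup_le ⟨_, hmin⟩ fun w hw => hw.2.1
  refine ⟨sSup T, hs.out hmin.1 hbs ⟨le_csSup hbdd hmin, hcb⟩, fun u hu => ?_⟩
  rcases lt_trichotomy u (sSup T) with huc | rfl | hcu
  · obtain ⟨w, hwT, huw⟩ := exists_lt_of_lt_csSup ⟨_, hmin⟩ huc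
    exact mul_nonneg_of_nonpos_of_nonpos (sub_nonpos.2 huc.le)
      ((hd hu hwT.1 huw.le).trans hwT.2.2)
  · simp
  · refine mul_nonneg (sub_nonneg.2 hcu.le) ?_
    by_contra! hdu
    have hub : u ≤ b := by
      by_contra! hbu
      exact (hb.trans (hd hbs hu hbu.le)).not_gt hdu
    exact (le_csSup hbdd ⟨hu, hub, hdu.le⟩).not_gt hcu

lemma MonotoneOn.sub_mul_nonneg {s : Set ℝ} {f : ℝ → ℝ} (hf : MonotoneOn f s) {c u r : ℝ}
    (hc : c ∈ s) (hu : u ∈ s) (h : 0 ≤ (u - c) * r) : 0 ≤ (f u - f c) * r := by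
  rcases lt_trichotomy u c with huc | rfl | hcu
  · exact mul_nonneg_of_nonpos_of_nonpos (sub_nonpos.2 (hf hu hc huc.le))
      (nonpos_of_mul_nonneg_right h (sub_neg.2 huc))
  · simp
  · exact mul_nonneg (sub_nonneg.2 (hf hc hu hcu.le))
      (nonneg_of_mul_nonneg_right h (sub_pos.2 hcu))

section Quantile

open Filter ProbabilityTheory Topology

variable (P : Measure ℝ)

lemma nonempty_setOf_le_cdf {p : ℝ} (hp : p < 1) : {x | p ≤ cdf P x}.Nonempty :=
  ((tendsto_cdf_atTop P).eventually_const_lt hp).exists.imp fun _ => le_of_lt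

lemma bddBelow_setOf_le_cdf {p : ℝ} (hp : 0 < p) : BddBelow {x | p ≤ cdf P x} := by
  obtain ⟨x, hx⟩ := ((tendsto_cdf_atBot P).eventually_lt_const hp).exists
  exact ⟨x, fun y hy => le_of_not_gt fun hyx => (hy.trans (monotone_cdf P hyx.le)).not_gt hx⟩

variable [IsProbabilityMeasure P]

lemma quantileFn_eq_sInf_cdf (p : ℝ) : quantileFn P p = sInf {x | p ≤ cdf P x} := by
  simp_rw [quantileFn, cdf_eq_real, measureReal_def]

lemma quantileFn_le_iff_le_cdf {p x : ℝ} (hp : 0 < p) (hp1 : p < 1) :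
    quantileFn P p ≤ x ↔ p ≤ cdf P x := by
  rw [quantileFn_eq_sInf_cdf]
  refine ⟨fun h => ?_, fun h => csInf_le (bddBelow_setOf_le_cdf P hp) h⟩
  have hright : ∀ y, x < y → p ≤ cdf P y := fun y hxy => by
    obtain ⟨z, hz, hzy⟩ := (csInf_lt_iff (bddBelow_setOf_le_cdf P hp)
      (nonempty_setOf_le_cdf P hp1)).mp (h.trans_lt hxy)
    exact hz.trans (monotone_cdf P hzy.le)
  have hcont : Tendsto (cdf P) (𝓝[>] x) (𝓝 (cdf P x)) :=
    ((cdf P).right_continuous x).tendsto.mono_left (nhdsWithin_mono x Ioi_subset_Ici_self)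
  exact ge_of_tendsto hcont (eventually_nhdsWithin_of_forall hright)

lemma monotoneOn_quantileFn : MonotoneOn (quantileFn P) (Ioo 0 1) := fun u hu v hv huv => by
  simp_rw [quantileFn_eq_sInf_cdf]
  exact csInf_le_csInf (bddBelow_setOf_le_cdf P hu.1) (nonempty_setOf_le_cdf P hv.2)
    fun x hx => huv.trans hx

lemma aemeasurable_quantileFn : AEMeasurable (quantileFn P) (volume.restrict (Ioo 0 1)) :=
  aemeasurable_restrict_of_monotoneOn measurableSet_Ioo (monotoneOn_quantileFn P)

lemma map_quantileFn_volume_Ioo : (volume.restrict (Ioo 0 1)).map (quantileFn P) = P := by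
  refine Measure.ext_of_Iic _ _ fun x => ?_
  rw [Measure.map_apply_of_aemeasurable (aemeasurable_quantileFn P) measurableSet_Iic,
    Measure.restrict_apply' measurableSet_Ioo, ← ofReal_cdf]
  have hset : quantileFn P ⁻¹' Iic x ∩ Ioo 0 1 = Iic (cdf P x) ∩ Ioo 0 1 := by
    ext u
    simp only [mem_inter_iff, mem_preimage, mem_Iic, and_congr_left_iff]
    exact fun hu => quantileFn_le_iff_le_cdf P hu.1 hu.2
  rw [hset]
  apply le_antisymm
  · calc volume (Iic (cdf P x) ∩ Ioo 0 1) ≤ volume (Ioc 0 (cdf P x)) :=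
          measure_mono fun u hu => ⟨hu.2.1, hu.1⟩
      _ = ENNReal.ofReal (cdf P x) := by simp
  · calc ENNReal.ofReal (cdf P x) = volume (Ioo 0 (cdf P x)) := by simp
      _ ≤ volume (Iic (cdf P x) ∩ Ioo 0 1) :=
          measure_mono fun u hu => ⟨hu.2.le, hu.1, hu.2.trans_le (cdf_le_one P x)⟩

lemma MeasureTheory.Integrable.comp_quantileFn {f : ℝ → ℝ} (hf : Integrable f P) :
    Integrable (fun u => f (quantileFn P u)) (volume.restrict (Ioo 0 1)) := by
  rw [← map_quantileFn_volume_Ioo P] at hf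
  exact hf.comp_aemeasurable (aemeasurable_quantileFn P)

lemma integral_comp_quantileFn {f : ℝ → ℝ} (hf : AEStronglyMeasurable f P) :
    ∫ u in Ioo 0 1, f (quantileFn P u) = ∫ x, f x ∂P := by
  rw [← map_quantileFn_volume_Ioo P] at hf
  rw [← integral_map (aemeasurable_quantileFn P) hf, map_quantileFn_volume_Ioo]

lemma integral_quantileFn_sub_mean (hP : Integrable id P) :
    ∫ u in Ioo 0 1, (quantileFn P u - ∫ x, x ∂P) = 0 := by
  rw [integral_sub (f := quantileFn P) (hP.comp_quantileFn P) (integrable_const _),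
    integral_comp_quantileFn P (f := fun x => x) aestronglyMeasurable_id]
  simp

end Quantile

/-- the dispersive order implies the dilation order: if
`F_X⁻¹(v) − F_X⁻¹(u) ≤ F_Y⁻¹(v) − F_Y⁻¹(u)` for all `0 < u < v < 1`, then
`X − EX ≤_cx Y − EY`. -/
theorem dispersive_implies_dilation
    (P Q : Measure ℝ) [IsProbabilityMeasure P] [IsProbabilityMeasure Q]
    (hIP : Integrable id P) (hIQ : Integrable id Q)
    (hdisp : ∀ u v : ℝ, 0 < u → u < v → v < 1 →
        quantileFn P v - quantileFn P u ≤ quantileFn Q v - quantileFn Q u)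
    (mP mQ : ℝ) (hmP : mP = ∫ x, x ∂P) (hmQ : mQ = ∫ x, x ∂Q) :
    ∀ φ : ℝ → ℝ, ConvexOn ℝ univ φ →
      Integrable (fun x => φ (x - mP)) P → Integrable (fun x => φ (x - mQ)) Q →
      ∫ x, φ (x - mP) ∂P ≤ ∫ x, φ (x - mQ) ∂Q := by
  intro φ hφ hφP hφQ
  set X := fun u => quantileFn P u - mP
  set Y := fun u => quantileFn Q u - mQ
  have hX : IntegrableOn X (Ioo 0 1) := hIP.comp_quantileFn P |>.sub (integrable_const mP)
  have hY : IntegrableOn Y (Ioo 0 1) := hIQ.comp_quantileFn Q |>.sub (integrable_const mQ)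
  have hmean : ∫ u in Ioo 0 1, X u = ∫ u in Ioo 0 1, Y u := by
    simp only [X, Y, hmP, hmQ, integral_quantileFn_sub_mean P hIP,
      integral_quantileFn_sub_mean Q hIQ]
  have hdmono : MonotoneOn (fun u => Y u - X u) (Ioo 0 1) := fun u hu v hv huv => by
    rcases huv.eq_or_lt with rfl | huv
    · rfl
    · linarith [hdisp u v hu.1 huv hv.2]
  obtain ⟨c, hc, hcross⟩ := hdmono.exists_mul_sub_nonneg_of_setIntegral_eq_zero ordConnected_Ioo
    (by simp) (by simp) (hY.sub hX) (by rw [integral_sub hY hX, hmean, sub_self])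
  have hXmono : MonotoneOn X (Ioo 0 1) := fun u hu v hv huv =>
    sub_le_sub_right (monotoneOn_quantileFn P hu hv huv) mP
  calc ∫ x, φ (x - mP) ∂P = ∫ u in Ioo 0 1, φ (X u) :=
        (integral_comp_quantileFn P hφP.aestronglyMeasurable).symm
    _ ≤ ∫ u in Ioo 0 1, φ (Y u) :=
        hφ.integral_comp_le_of_ae_mul_sub_nonneg hX hY hmean (hφP.comp_quantileFn P)
          (hφQ.comp_quantileFn Q) <|
          ae_restrict_of_forall_mem measurableSet_Ioo fun u hu =>
            hXmono.sub_mul_nonneg hc hu (hcross u hu)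
    _ = ∫ x, φ (x - mQ) ∂Q := integral_comp_quantileFn Q hφQ.aestronglyMeasurable
end

section
/- Let X ∼ Lomax(α₁, λ₁) and Y ∼ Lomax(α₂, λ₂). Then the quantile inequality q(p; α₁, λ₁) ≤ q(p; α₂, λ₂) holds for all p ∈ (0,1) if and only if λ₁/α₁ ≤ λ₂/α₂ and α₁ ≥ α₂, where q(p; α, λ) = λ((1−p)^{−1/α} − 1). -/
open Set

/-- The quantile function of the Lomax distribution with parameters `α, λ > 0`. -/
noncomputable def lomaxQuantile (α lam p : ℝ) : ℝ := lam * ((1 - p) ^ (-1 / α) - 1)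

open Real

theorem aux_convex (u v : ℝ) (hu : 0 < u) (huv : u ≤ v) : v * (exp u - 1) ≤ u * (exp v - 1) := by
  have hv : 0 < v := hu.trans_le huv
  have hb : 0 ≤ u / v := by positivity
  have ha : 0 ≤ 1 - u / v := by
    have : u / v ≤ 1 := (div_le_one hv).2 huv
    linarith
  have hsum : (1 - u / v) + u / v = 1 := by ring
  have hcvx := convexOn_exp.2 (mem_univ (0:ℝ)) (mem_univ v) ha hb hsum
  simp only [smul_eq_mul, mul_zero, zero_add, exp_zero, mul_one] at hcvx
  rw [div_mul_cancel₀ u hv.ne'] at hcvx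
  have h3 := mul_le_mul_of_nonneg_left hcvx hv.le
  have h4 : v * (1 - u/v + u/v * exp v) = v - u + u * exp v := by field_simp
  rw [h4] at h3
  linarith

theorem lomax_subst (α lam s : ℝ) :
    lomaxQuantile α lam (1 - exp (-s)) = lam * (exp (s/α) - 1) := by
  unfold lomaxQuantile
  rw [show (1:ℝ) - (1 - exp (-s)) = exp (-s) by ring,
    Real.rpow_def_of_pos (exp_pos _), Real.log_exp,
    show -s * (-1/α) = s/α by ring]

/-- for Lomax distributions, `q(p; α₁, λ₁) ≤ q(p; α₂, λ₂)` for all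
`p ∈ (0,1)` if and only if `λ₁/α₁ ≤ λ₂/α₂` and `α₁ ≥ α₂`. -/
theorem lomax_quantile_order_iff (α₁ α₂ lam₁ lam₂ : ℝ)
    (hα₁ : 0 < α₁) (hα₂ : 0 < α₂) (hlam₁ : 0 < lam₁) (hlam₂ : 0 < lam₂) :
    (∀ p ∈ Ioo (0 : ℝ) 1, lomaxQuantile α₁ lam₁ p ≤ lomaxQuantile α₂ lam₂ p) ↔
      (lam₁ / α₁ ≤ lam₂ / α₂ ∧ α₁ ≥ α₂) := by
  constructor
  · intro H
    have H' : ∀ s : ℝ, 0 < s →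
        lam₁ * (exp (s/α₁) - 1) ≤ lam₂ * (exp (s/α₂) - 1) := by
      intro s hs
      have hmem : (1 - exp (-s)) ∈ Ioo (0:ℝ) 1 := by
        constructor
        · have : exp (-s) < 1 := by
            rw [exp_lt_one_iff]; linarith
          linarith
        · have := exp_pos (-s); linarith
      have := H _ hmem
      rwa [lomax_subst, lomax_subst] at this
    constructor
    · by_contra hlt
      push_neg at hlt
      set r : ℝ := (lam₁/α₁)/(lam₂/α₂) with hrdef
      have hr1 : 1 < r := (one_lt_div (by positivity)).2 hlt
      set s : ℝ := α₂ * Real.log r with hsdef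
      have hs : 0 < s := mul_pos hα₂ (log_pos hr1)
      have hx1 : 0 < s/α₁ := by positivity
      have hx2 : 0 < s/α₂ := by positivity
      have h1 : s/α₁ < exp (s/α₁) - 1 := by
        have := add_one_lt_exp (x := s/α₁) hx1.ne'
        linarith
      have h2 : exp (s/α₂) - 1 < (s/α₂) * exp (s/α₂) := by
        have h := add_one_lt_exp (x := -(s/α₂)) (by linarith : -(s/α₂) ≠ 0)
        have hep := exp_pos (s/α₂)
        have h5 := mul_lt_mul_of_pos_right h hep
        rw [← exp_add, neg_add_cancel, exp_zero] at h5
        nlinarith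
      have h3 : exp (s/α₂) = r := by
        have hsv : s/α₂ = Real.log r := by rw [hsdef]; field_simp
        rw [hsv, exp_log (by positivity)]
      have key : lam₂ * ((s/α₂) * r) = lam₁ * (s/α₁) := by
        rw [hrdef]; field_simp
      have Hs := H' s hs
      have c1 : lam₁ * (s/α₁) < lam₁ * (exp (s/α₁) - 1) :=
        mul_lt_mul_of_pos_left h1 hlam₁
      have c2 : lam₂ * (exp (s/α₂) - 1) < lam₂ * ((s/α₂) * exp (s/α₂)) :=
        mul_lt_mul_of_pos_left h2 hlam₂
      rw [h3] at c2 Hs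
      linarith
    · by_contra hlt
      push_neg at hlt
      set E : ℝ := 2 + lam₂/lam₁ with hEdef
      have hE : 1 < E := by
        have : 0 < lam₂/lam₁ := by positivity
        rw [hEdef]; linarith
      set c : ℝ := 1/α₁ - 1/α₂ with hcdef
      have hc : 0 < c := by
        rw [hcdef]
        have : 1/α₂ < 1/α₁ := one_div_lt_one_div_of_lt hα₁ hlt
        linarith
      set s : ℝ := Real.log E / c with hsdef
      have hs : 0 < s := div_pos (log_pos hE) hc
      have hEs : exp (c*s) = E := by
        rw [hsdef, mul_div_cancel₀ _ hc.ne', exp_log (by linarith)]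
      have hA : exp (s/α₁) = exp (s/α₂) * E := by
        rw [← hEs, ← exp_add]
        congr 1
        rw [hcdef]
        field_simp
        ring
      have hB : 1 ≤ exp (s/α₂) := one_le_exp (by positivity)
      have Hs := H' s hs
      rw [hA] at Hs
      -- Hs : lam₁ * (B * E - 1) ≤ lam₂ * (B - 1), B ≥ 1, lam₁ * E = 2*lam₁ + lam₂
      have hE2 : lam₁ * E = 2*lam₁ + lam₂ := by rw [hEdef]; field_simp
      have h6 : lam₁ * (exp (s/α₂) * E) = (2*lam₁+lam₂) * exp (s/α₂) := by
        rw [show lam₁ * (exp (s/α₂) * E) = (lam₁*E) * exp (s/α₂) from by ring, hE2]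
      nlinarith [Hs, hB, h6, hlam₁, hlam₂]
  · rintro ⟨hr, hα⟩ p hp
    obtain ⟨hp0, hp1⟩ := hp
    have h1p : 0 < 1 - p := by linarith
    set s : ℝ := -Real.log (1-p) with hsdef
    have hs : 0 < s := by
      rw [hsdef, neg_pos]
      exact log_neg h1p (by linarith)
    have hps : p = 1 - exp (-s) := by
      rw [hsdef, neg_neg, exp_log h1p]; ring
    rw [hps, lomax_subst, lomax_subst]
    set u : ℝ := s/α₁ with hudef
    set v : ℝ := s/α₂ with hvdef
    have hu : 0 < u := by positivity
    have hv : 0 < v := by positivity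
    have huv : u ≤ v := by
      rw [hudef, hvdef]
      exact div_le_div_of_nonneg_left hs.le hα₂ hα
    have key := aux_convex u v hu huv
    have hA : α₁ * (exp u - 1) ≤ α₂ * (exp v - 1) := by
      have h1 : α₁ = s / u := by rw [hudef]; field_simp
      have h2 : α₂ = s / v := by rw [hvdef]; field_simp
      rw [h1, h2, div_mul_eq_mul_div, div_mul_eq_mul_div, div_le_div_iff₀ hu hv]
      nlinarith [key, hs]
    have hnn : 0 ≤ α₁ * (exp u - 1) := by
      have := one_le_exp hu.le
      nlinarith
    calc lam₁ * (exp u - 1) = (lam₁/α₁) * (α₁ * (exp u - 1)) := by field_simp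
      _ ≤ (lam₂/α₂) * (α₁ * (exp u - 1)) := mul_le_mul_of_nonneg_right hr hnn
      _ ≤ (lam₂/α₂) * (α₂ * (exp v - 1)) := mul_le_mul_of_nonneg_left hA (by positivity)
      _ = lam₂ * (exp v - 1) := by field_simp
end

section
/- Let X ∼ Lomax(α₁, λ₁) and Y ∼ Lomax(α₂, λ₂) with α₁, α₂ > 0. Then X ≤_disp Y (dispersive order) if and only if λ₁/α₁ ≤ λ₂/α₂ and α₁ ≥ α₂. Equivalently, the inequality (α₂/λ₂)(1−p)^{1/α₂} ≤ (α₁/λ₁)(1−p)^{1/α₁} holds for all p ∈ (0,1) iff these two parameter conditions hold. -/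
open Set Filter Topology

/-- for Lomax distributions `X ∼ Lomax(α₁,λ₁)` and `Y ∼ Lomax(α₂,λ₂)`, the
dispersive-order criterion `(α₂/λ₂)(1−p)^{1/α₂} ≤ (α₁/λ₁)(1−p)^{1/α₁}` (i.e.
`f_Y(F_Y⁻¹(p)) ≤ f_X(F_X⁻¹(p))`) holds for all `p ∈ (0,1)` if and only if
`λ₁/α₁ ≤ λ₂/α₂` and `α₁ ≥ α₂`. -/
theorem lomax_dispersive_iff (α₁ α₂ lam₁ lam₂ : ℝ)
    (hα₁ : 0 < α₁) (hα₂ : 0 < α₂) (hlam₁ : 0 < lam₁) (hlam₂ : 0 < lam₂) :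
    (∀ p ∈ Ioo (0 : ℝ) 1,
        α₂ / lam₂ * (1 - p) ^ (1 / α₂) ≤ α₁ / lam₁ * (1 - p) ^ (1 / α₁)) ↔
      (lam₁ / α₁ ≤ lam₂ / α₂ ∧ α₁ ≥ α₂) := by
  set c₁ := α₁ / lam₁ with hc₁
  set c₂ := α₂ / lam₂ with hc₂
  have hc₁pos : 0 < c₁ := div_pos hα₁ hlam₁
  have hc₂pos : 0 < c₂ := div_pos hα₂ hlam₂
  constructor
  · intro h
    -- reformulate with t = 1 - p
    have h' : ∀ t ∈ Ioo (0 : ℝ) 1, c₂ * t ^ (1 / α₂) ≤ c₁ * t ^ (1 / α₁) := by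
      intro t ht
      have := h (1 - t) ⟨by linarith [ht.2], by linarith [ht.1]⟩
      simpa using this
    -- (1) c₂ ≤ c₁ by letting t → 1⁻
    have hcc : c₂ ≤ c₁ := by
      have hne : (𝓝[Ioo (0:ℝ) 1] 1).NeBot := by
        rw [nhdsWithin_Ioo_eq_nhdsLT (by norm_num : (0:ℝ) < 1)]
        infer_instance
      have t1 : Tendsto (fun t : ℝ => c₂ * t ^ (1 / α₂)) (𝓝[Ioo (0:ℝ) 1] 1) (𝓝 c₂) := by
        have : ContinuousAt (fun t : ℝ => c₂ * t ^ (1 / α₂)) 1 :=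
          continuousAt_const.mul (Real.continuousAt_rpow_const 1 (1 / α₂) (Or.inl one_ne_zero))
        simpa using this.tendsto.mono_left
          (nhdsWithin_le_nhds : 𝓝[Ioo (0:ℝ) 1] 1 ≤ 𝓝 1)
      have t2 : Tendsto (fun t : ℝ => c₁ * t ^ (1 / α₁)) (𝓝[Ioo (0:ℝ) 1] 1) (𝓝 c₁) := by
        have : ContinuousAt (fun t : ℝ => c₁ * t ^ (1 / α₁)) 1 :=
          continuousAt_const.mul (Real.continuousAt_rpow_const 1 (1 / α₁) (Or.inl one_ne_zero))
        simpa using this.tendsto.mono_left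
          (nhdsWithin_le_nhds : 𝓝[Ioo (0:ℝ) 1] 1 ≤ 𝓝 1)
      exact le_of_tendsto_of_tendsto t1 t2
        (eventually_mem_nhdsWithin.mono fun t ht => h' t ht)
    -- (2) α₂ ≤ α₁ by letting t → 0⁺
    have haa : α₂ ≤ α₁ := by
      by_contra hlt
      push_neg at hlt
      have he : 0 < 1 / α₁ - 1 / α₂ := by
        have : 1 / α₁ > 1 / α₂ := by
          apply one_div_lt_one_div_of_lt hα₁ hlt
        linarith
      -- c₂ ≤ c₁ * t ^ (1/α₁ - 1/α₂) for t ∈ (0,1)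
      have h'' : ∀ t ∈ Ioo (0 : ℝ) 1, c₂ ≤ c₁ * t ^ (1 / α₁ - 1 / α₂) := by
        intro t ht
        have hrp : (0:ℝ) < t ^ (1 / α₂) := Real.rpow_pos_of_pos ht.1 _
        have h0 := h' t ht
        have hmul : c₂ * t ^ (1 / α₂) ≤ c₁ * t ^ (1 / α₁ - 1 / α₂) * t ^ (1 / α₂) := by
          rw [mul_assoc, ← Real.rpow_add ht.1]
          simpa using h0
        exact le_of_mul_le_mul_right hmul hrp
      have hne : (𝓝[Ioo (0:ℝ) 1] 0).NeBot := by
        rw [nhdsWithin_Ioo_eq_nhdsGT (by norm_num : (0:ℝ) < 1)]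
        infer_instance
      have t2 : Tendsto (fun t : ℝ => c₁ * t ^ (1 / α₁ - 1 / α₂)) (𝓝[Ioo (0:ℝ) 1] 0)
          (𝓝 0) := by
        have : ContinuousAt (fun t : ℝ => c₁ * t ^ (1 / α₁ - 1 / α₂)) 0 :=
          continuousAt_const.mul (Real.continuousAt_rpow_const 0 _ (Or.inr he.le))
        have h0 := this.tendsto.mono_left
          (nhdsWithin_le_nhds : 𝓝[Ioo (0:ℝ) 1] 0 ≤ 𝓝 0)
        rw [Real.zero_rpow he.ne', mul_zero] at h0
        exact h0
      have : c₂ ≤ 0 := le_of_tendsto_of_tendsto tendsto_const_nhds t2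
        (eventually_mem_nhdsWithin.mono fun t ht => h'' t ht)
      linarith
    refine ⟨?_, haa⟩
    rw [div_le_div_iff₀ hα₁ hα₂]
    rw [hc₁, hc₂, div_le_div_iff₀ hlam₂ hlam₁] at hcc
    nlinarith
  · rintro ⟨hl, ha⟩ p hp
    have ht : 0 < 1 - p := by linarith [hp.2]
    have ht1 : 1 - p ≤ 1 := by linarith [hp.1]
    have hcc : c₂ ≤ c₁ := by
      rw [hc₁, hc₂, div_le_div_iff₀ hlam₂ hlam₁]
      rw [div_le_div_iff₀ hα₁ hα₂] at hl
      nlinarith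
    have hexp : 1 / α₁ ≤ 1 / α₂ := one_div_le_one_div_of_le hα₂ ha
    have hpow : (1 - p) ^ (1 / α₂) ≤ (1 - p) ^ (1 / α₁) :=
      Real.rpow_le_rpow_of_exponent_ge ht ht1 hexp
    calc c₂ * (1 - p) ^ (1 / α₂) ≤ c₁ * (1 - p) ^ (1 / α₂) := by
          apply mul_le_mul_of_nonneg_right hcc (Real.rpow_pos_of_pos ht _).le
      _ ≤ c₁ * (1 - p) ^ (1 / α₁) := mul_le_mul_of_nonneg_left hpow hc₁pos.le
end

section
/- Let X ∼ Lomax(α₁, λ₁) and Y ∼ Lomax(α₂, λ₂) with α₁, α₂ > 1. Then the inequality (α₁/(α₁−1))·q(p; α₁, λ₁) ≤ (α₂/(α₂−1))·q(p; α₂, λ₂) holds for all p ∈ (0,1) if and only if α₁ ≥ α₂ and λ₁/(α₁−1) ≤ λ₂/(α₂−1). -/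
/-!
Substituting `p = 1 - exp (-s)`, which maps `s ∈ (0, ∞)` onto `p ∈ (0, 1)`, turns the
inequality into `c₁ · α₁ (exp (s/α₁) - 1) ≤ c₂ · α₂ (exp (s/α₂) - 1)` for all `s > 0`, where
`cᵢ = λᵢ/(αᵢ - 1)`. Since `α (exp (s/α) - 1) = s · (exp u - 1)/u` with `u = s/α`, convexity of
`exp` makes it decreasing in `α`, which gives sufficiency. For necessity, `α (exp (s/α) - 1) ~ s`
as `s → 0` forces `c₁ ≤ c₂`, and the faster exponential growth of `exp (s/α₁)` as `s → ∞` forces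
`α₁ ≥ α₂`.
-/

open Set

open Real Filter Topology Asymptotics

lemma lomaxQuantile_one_sub_exp_neg (α lam s : ℝ) :
    lomaxQuantile α lam (1 - exp (-s)) = lam * (exp (s / α) - 1) := by
  rw [lomaxQuantile, sub_sub_cancel, ← exp_mul]
  ring_nf

lemma forall_mem_Ioo_zero_one_iff_forall_pos {P : ℝ → Prop} :
    (∀ p ∈ Ioo (0 : ℝ) 1, P p) ↔ ∀ s > 0, P (1 - exp (-s)) := by
  refine ⟨fun h s hs => h _ ⟨?_, ?_⟩, fun h p ⟨hp₀, hp₁⟩ => ?_⟩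
  · simpa using hs
  · linarith [exp_pos (-s)]
  · have hlog : 0 < -log (1 - p) := neg_pos.2 (log_neg (by linarith) (by linarith))
    simpa [exp_log (sub_pos.2 hp₁)] using h _ hlog

lemma mul_exp_div_sub_one_le_of_le {a b s : ℝ} (ha : 0 < a) (hab : a ≤ b) (hs : 0 < s) :
    b * (exp (s / b) - 1) ≤ a * (exp (s / a) - 1) := by
  have hu : 0 < s / b := div_pos hs (ha.trans_le hab)
  have hslope : (exp (s / b) - 1) / (s / b) ≤ (exp (s / a) - 1) / (s / a) := by
    simpa using convexOn_exp.secant_mono (a := 0) (mem_univ _) (mem_univ _) (mem_univ _)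
      hu.ne' (div_pos hs ha).ne' (div_le_div_of_nonneg_left hs.le ha hab)
  calc b * (exp (s / b) - 1) = s * ((exp (s / b) - 1) / (s / b)) := by field_simp
    _ ≤ s * ((exp (s / a) - 1) / (s / a)) := by gcongr
    _ = a * (exp (s / a) - 1) := by field_simp

lemma tendsto_mul_exp_div_sub_one_div_nhdsNE {a : ℝ} (ha : a ≠ 0) :
    Tendsto (fun s => a * (exp (s / a) - 1) / s) (𝓝[≠] 0) (𝓝 1) := by
  have hderiv : HasDerivAt (fun s => a * (exp (s / a) - 1)) 1 0 := by
    have := (((hasDerivAt_id (0 : ℝ)).div_const a).exp.sub_const 1).const_mul a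
    simpa [ha] using this
  refine hderiv.tendsto_slope.congr fun s => ?_
  simp [slope_def_field]

lemma tendsto_mul_exp_div_sub_mul_exp_div_atTop {A B a b : ℝ} (hA : 0 < A) (ha : 0 < a)
    (hab : a < b) : Tendsto (fun x => A * exp (x / a) - B * exp (x / b)) atTop atTop := by
  have hgrow : Tendsto (fun x => exp (x / a)) atTop atTop :=
    tendsto_exp_atTop.comp (tendsto_id.atTop_div_const ha)
  have hgap : Tendsto (fun x => x / b - x / a) atTop atBot := by
    have hpos : 0 < 1 / a - 1 / b := sub_pos.2 (one_div_lt_one_div_of_lt ha hab)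
    refine (tendsto_neg_atTop_atBot.comp (tendsto_id.atTop_mul_const hpos)).congr fun x => ?_
    simp only [Function.comp_apply, id]
    ring
  have hratio : Tendsto (fun x => A - B * exp (x / b - x / a)) atTop (𝓝 (A - B * 0)) :=
    tendsto_const_nhds.sub (tendsto_const_nhds.mul (tendsto_exp_comp_nhds_zero.2 hgap))
  refine (hgrow.atTop_mul_pos (by simpa using hA) hratio).congr fun x => ?_
  rw [exp_sub]
  field_simp

section

variable {c₁ c₂ α₁ α₂ : ℝ}

lemma scale_le_of_forall_pos_mul_exp_div_sub_one_le (hc₁ : 0 < c₁) (hα₁ : 0 < α₁)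
    (h : ∀ s > 0, c₁ * (α₁ * (exp (s / α₁) - 1)) ≤ c₂ * (α₂ * (exp (s / α₂) - 1))) :
    α₂ ≤ α₁ := by
  by_contra! hlt
  have hgap : Tendsto (fun s => c₁ * (α₁ * (exp (s / α₁) - 1)) - c₂ * (α₂ * (exp (s / α₂) - 1)))
      atTop atTop := by
    have hexp := tendsto_mul_exp_div_sub_mul_exp_div_atTop (B := c₂ * α₂) (mul_pos hc₁ hα₁) hα₁ hlt
    refine (tendsto_atTop_add_const_right _ (c₂ * α₂ - c₁ * α₁) hexp).congr fun s => ?_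
    ring
  obtain ⟨s, hs_gap, hs⟩ := ((hgap.eventually_gt_atTop 0).and (eventually_gt_atTop 0)).exists
  linarith [h s hs]

lemma coeff_le_of_forall_pos_mul_exp_div_sub_one_le (hα₁ : α₁ ≠ 0) (hα₂ : α₂ ≠ 0)
    (h : ∀ s > 0, c₁ * (α₁ * (exp (s / α₁) - 1)) ≤ c₂ * (α₂ * (exp (s / α₂) - 1))) :
    c₁ ≤ c₂ := by
  have hlim {c α : ℝ} (hα : α ≠ 0) :
      Tendsto (fun s => c * (α * (exp (s / α) - 1) / s)) (𝓝[>] 0) (𝓝 c) := by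
    simpa using ((tendsto_mul_exp_div_sub_one_div_nhdsNE hα).const_mul c).mono_left
      (nhdsGT_le_nhdsNE 0)
  refine le_of_tendsto_of_tendsto (hlim hα₁) (hlim hα₂) ?_
  filter_upwards [self_mem_nhdsWithin] with s (hs : 0 < s)
  simpa only [mul_div_assoc] using div_le_div_of_nonneg_right (h s hs) hs.le

theorem forall_pos_mul_exp_div_sub_one_le_iff (hc₁ : 0 < c₁) (hα₁ : 0 < α₁) (hα₂ : 0 < α₂) :
    (∀ s > 0, c₁ * (α₁ * (exp (s / α₁) - 1)) ≤ c₂ * (α₂ * (exp (s / α₂) - 1))) ↔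
      α₂ ≤ α₁ ∧ c₁ ≤ c₂ := by
  refine ⟨fun h => ⟨scale_le_of_forall_pos_mul_exp_div_sub_one_le hc₁ hα₁ h,
    coeff_le_of_forall_pos_mul_exp_div_sub_one_le hα₁.ne' hα₂.ne' h⟩, fun ⟨hα, hc⟩ s hs => ?_⟩
  have hE₁ : 0 ≤ α₁ * (exp (s / α₁) - 1) :=
    mul_nonneg hα₁.le (sub_nonneg.2 (one_le_exp (div_pos hs hα₁).le))
  calc c₁ * (α₁ * (exp (s / α₁) - 1)) ≤ c₂ * (α₁ * (exp (s / α₁) - 1)) := by gcongr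
    _ ≤ c₂ * (α₂ * (exp (s / α₂) - 1)) :=
      mul_le_mul_of_nonneg_left (mul_exp_div_sub_one_le_of_le hα₂ hα hs) (hc₁.le.trans hc)

end

theorem lomax_dilation_iff_general (α₁ α₂ lam₁ lam₂ : ℝ)
    (hα₁ : 1 < α₁) (hα₂ : 1 < α₂) (hlam₁ : 0 < lam₁) :
    (∀ p ∈ Ioo (0 : ℝ) 1,
        α₁ / (α₁ - 1) * lomaxQuantile α₁ lam₁ p ≤ α₂ / (α₂ - 1) * lomaxQuantile α₂ lam₂ p) ↔
      (α₁ ≥ α₂ ∧ lam₁ / (α₁ - 1) ≤ lam₂ / (α₂ - 1)) := by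
  have hscaled (α lam s : ℝ) : α / (α - 1) * lomaxQuantile α lam (1 - exp (-s)) =
      lam / (α - 1) * (α * (exp (s / α) - 1)) := by
    rw [lomaxQuantile_one_sub_exp_neg]
    ring
  simp only [forall_mem_Ioo_zero_one_iff_forall_pos, hscaled, ge_iff_le]
  exact forall_pos_mul_exp_div_sub_one_le_iff (div_pos hlam₁ (sub_pos.2 hα₁)) (by linarith)
    (by linarith)

/-- for Lomax distributions with `α₁, α₂ > 1`, the inequality
`(α₁/(α₁−1))·q(p;α₁,λ₁) ≤ (α₂/(α₂−1))·q(p;α₂,λ₂)` holds for all `p ∈ (0,1)` if and only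
if `α₁ ≥ α₂` and `λ₁/(α₁−1) ≤ λ₂/(α₂−1)`. -/
theorem lomax_dilation_iff (α₁ α₂ lam₁ lam₂ : ℝ)
    (hα₁ : 1 < α₁) (hα₂ : 1 < α₂) (hlam₁ : 0 < lam₁) (hlam₂ : 0 < lam₂) :
    (∀ p ∈ Ioo (0 : ℝ) 1,
        α₁ / (α₁ - 1) * lomaxQuantile α₁ lam₁ p ≤ α₂ / (α₂ - 1) * lomaxQuantile α₂ lam₂ p) ↔
      (α₁ ≥ α₂ ∧ lam₁ / (α₁ - 1) ≤ lam₂ / (α₂ - 1)) :=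
  lomax_dilation_iff_general α₁ α₂ lam₁ lam₂ hα₁ hα₂ hlam₁
end

section
/- Let X be integrable with mean μ, continuous strictly increasing cdf, and let α ∈ (0,1/2). Then ((1−2α)/(1−α))·E|X−μ| < e_X(1−α) − e_X(α) < ((1−2α)/α)·E|X−μ|. -/
/-!
Write `π⁺(t) = E(X - t)₊` and `π⁻(t) = E(t - X)₊`, so that `π⁺(t) - π⁻(t) = μ - t` and
`E|X - μ| = π⁺(μ) + π⁻(μ)`. Combined with the expectile condition this gives
`(1 - α)(e(1-α) - e(α)) = (1 - 2α)(π⁺(e(α)) + π⁻(e(1-α)))` and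
`α(e(1-α) - e(α)) = (1 - 2α)(π⁻(e(α)) + π⁺(e(1-α)))`.
Since the cdf is strictly increasing, every half-line `(-∞, s]` and `(t, ∞)` has positive mass,
so `π⁻` is positive and strictly increasing and `π⁺` is strictly decreasing. Positivity of `π⁻` puts `e(α) < μ < e(1-α)`, and then
monotonicity compares both right-hand sides with `(1 - 2α) E|X - μ|`.
-/

open MeasureTheory Set

noncomputable def upperPartialMoment (P : Measure ℝ) (t : ℝ) : ℝ := ∫ x, max (x - t) 0 ∂P

noncomputable def lowerPartialMoment (P : Measure ℝ) (t : ℝ) : ℝ := ∫ x, max (t - x) 0 ∂P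

section PartialMoments

variable {P : Measure ℝ}

lemma lowerPartialMoment_nonneg (t : ℝ) : 0 ≤ lowerPartialMoment P t :=
  integral_nonneg fun _ => le_max_right _ _

lemma integrable_max_sub_const_zero [IsFiniteMeasure P] (hInt : Integrable id P) (t : ℝ) :
    Integrable (fun x => max (x - t) 0) P :=
  (hInt.sub (integrable_const t)).pos_part

lemma integrable_max_const_sub_zero [IsFiniteMeasure P] (hInt : Integrable id P) (t : ℝ) :
    Integrable (fun x => max (t - x) 0) P :=
  ((integrable_const t).sub hInt).pos_part

lemma upperPartialMoment_sub_lowerPartialMoment [IsProbabilityMeasure P]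
    (hInt : Integrable id P) (t : ℝ) :
    upperPartialMoment P t - lowerPartialMoment P t = ∫ x, x ∂P - t := by
  rw [upperPartialMoment, lowerPartialMoment, ← integral_sub
    (integrable_max_sub_const_zero hInt t) (integrable_max_const_sub_zero hInt t)]
  simp_rw [← neg_sub _ t, max_zero_sub_max_neg_zero_eq_self]
  rw [integral_sub (f := fun x => x) hInt (integrable_const t)]
  simp

lemma integral_abs_sub_eq_upperPartialMoment_add_lowerPartialMoment [IsFiniteMeasure P]
    (hInt : Integrable id P) (t : ℝ) :
    ∫ x, |x - t| ∂P = upperPartialMoment P t + lowerPartialMoment P t := by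
  rw [upperPartialMoment, lowerPartialMoment, ← integral_add
    (integrable_max_sub_const_zero hInt t) (integrable_max_const_sub_zero hInt t)]
  simp_rw [← neg_sub _ t, max_zero_add_max_neg_zero_eq_abs_self]

lemma lowerPartialMoment_add_le [IsFiniteMeasure P] (hInt : Integrable id P) {s t : ℝ}
    (hst : s ≤ t) : lowerPartialMoment P s + (t - s) * P.real (Iic s) ≤ lowerPartialMoment P t := by
  have hind : (Iic s).indicator (fun _ => t - s) ≤ fun x => max (t - x) 0 - max (s - x) 0 :=
    fun x => by
      simp only [indicator, mem_Iic]
      split_ifs <;> grind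
  have h := integral_mono ((integrable_const _).indicator measurableSet_Iic)
    ((integrable_max_const_sub_zero hInt t).sub (integrable_max_const_sub_zero hInt s)) hind
  rw [integral_indicator_const _ measurableSet_Iic, smul_eq_mul, integral_sub'
    (integrable_max_const_sub_zero hInt t) (integrable_max_const_sub_zero hInt s)] at h
  unfold lowerPartialMoment
  linarith

lemma upperPartialMoment_add_le [IsFiniteMeasure P] (hInt : Integrable id P) {s t : ℝ}
    (hst : s ≤ t) : upperPartialMoment P t + (t - s) * P.real (Ioi t) ≤ upperPartialMoment P s := by
  have hind : (Ioi t).indicator (fun _ => t - s) ≤ fun x => max (x - s) 0 - max (x - t) 0 :=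
    fun x => by
      simp only [indicator, mem_Ioi]
      split_ifs <;> grind
  have h := integral_mono ((integrable_const _).indicator measurableSet_Ioi)
    ((integrable_max_sub_const_zero hInt s).sub (integrable_max_sub_const_zero hInt t)) hind
  rw [integral_indicator_const _ measurableSet_Ioi, smul_eq_mul, integral_sub'
    (integrable_max_sub_const_zero hInt s) (integrable_max_sub_const_zero hInt t)] at h
  unfold upperPartialMoment
  linarith

lemma strictMono_lowerPartialMoment [IsFiniteMeasure P] (hInt : Integrable id P)
    (hpos : ∀ s, 0 < P.real (Iic s)) : StrictMono (lowerPartialMoment P) := fun s t hst => by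
  nlinarith [lowerPartialMoment_add_le hInt hst.le, mul_pos (sub_pos.2 hst) (hpos s)]

lemma strictAnti_upperPartialMoment [IsFiniteMeasure P] (hInt : Integrable id P)
    (hpos : ∀ t, 0 < P.real (Ioi t)) : StrictAnti (upperPartialMoment P) := fun s t hst => by
  nlinarith [upperPartialMoment_add_le hInt hst.le, mul_pos (sub_pos.2 hst) (hpos t)]

lemma lowerPartialMoment_pos [IsFiniteMeasure P] (hInt : Integrable id P)
    (hpos : ∀ s, 0 < P.real (Iic s)) (t : ℝ) : 0 < lowerPartialMoment P t :=
  (lowerPartialMoment_nonneg (t - 1)).trans_lt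
    (strictMono_lowerPartialMoment hInt hpos (sub_one_lt t))

lemma measureReal_Iic_pos_of_strictMono (hmono : StrictMono fun t => P.real (Iic t)) (s : ℝ) :
    0 < P.real (Iic s) :=
  measureReal_nonneg.trans_lt (hmono (sub_one_lt s))

lemma measureReal_Ioi_pos_of_strictMono [IsProbabilityMeasure P]
    (hmono : StrictMono fun t => P.real (Iic t)) (t : ℝ) : 0 < P.real (Ioi t) := by
  rw [← compl_Iic, probReal_compl_eq_one_sub measurableSet_Iic]
  linarith [hmono (lt_add_one t), measureReal_le_one (μ := P) (s := Iic (t + 1))]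

end PartialMoments

namespace IsExpectile

variable {P : Measure ℝ} [IsProbabilityMeasure P] {τ e : ℝ}

lemma mul_lowerPartialMoment (he : IsExpectile P τ e) (hInt : Integrable id P) :
    (1 - 2 * τ) * lowerPartialMoment P e = τ * (∫ x, x ∂P - e) := by
  have he' : τ * upperPartialMoment P e = (1 - τ) * lowerPartialMoment P e := he
  linear_combination τ * upperPartialMoment_sub_lowerPartialMoment hInt e - he'

lemma mul_upperPartialMoment (he : IsExpectile P τ e) (hInt : Integrable id P) :
    (1 - 2 * τ) * upperPartialMoment P e = (1 - τ) * (∫ x, x ∂P - e) := by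
  have he' : τ * upperPartialMoment P e = (1 - τ) * lowerPartialMoment P e := he
  linear_combination (1 - τ) * upperPartialMoment_sub_lowerPartialMoment hInt e - he'

lemma lt_integral_s15 (he : IsExpectile P τ e) (hInt : Integrable id P) (hτ₀ : 0 < τ)
    (hτ : τ < 1 / 2) (hpos : 0 < lowerPartialMoment P e) : e < ∫ x, x ∂P := by
  nlinarith [he.mul_lowerPartialMoment hInt]

lemma integral_lt_s15 (he : IsExpectile P τ e) (hInt : Integrable id P) (hτ : 1 / 2 < τ)
    (hpos : 0 < lowerPartialMoment P e) : ∫ x, x ∂P < e := by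
  nlinarith [he.mul_lowerPartialMoment hInt]

variable {α eLo eHi : ℝ}

lemma one_sub_mul_sub_eq (heLo : IsExpectile P α eLo) (heHi : IsExpectile P (1 - α) eHi)
    (hInt : Integrable id P) :
    (1 - α) * (eHi - eLo) =
      (1 - 2 * α) * (upperPartialMoment P eLo + lowerPartialMoment P eHi) := by
  linear_combination heHi.mul_lowerPartialMoment hInt - heLo.mul_upperPartialMoment hInt

lemma mul_sub_eq (heLo : IsExpectile P α eLo) (heHi : IsExpectile P (1 - α) eHi)
    (hInt : Integrable id P) :
    α * (eHi - eLo) = (1 - 2 * α) * (lowerPartialMoment P eLo + upperPartialMoment P eHi) := by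
  linear_combination heHi.mul_upperPartialMoment hInt - heLo.mul_lowerPartialMoment hInt

end IsExpectile

theorem interexpectile_range_MAD_bounds_general
    (P : Measure ℝ) [IsProbabilityMeasure P] (hInt : Integrable id P)
    (hmono : StrictMono fun t : ℝ => (P (Iic t)).toReal)
    (μ : ℝ) (hμ : μ = ∫ x, x ∂P)
    (α : ℝ) (hα : α ∈ Ioo (0 : ℝ) (1 / 2))
    (eLo eHi : ℝ) (heLo : IsExpectile P α eLo) (heHi : IsExpectile P (1 - α) eHi) :
    (1 - 2 * α) / (1 - α) * ∫ x, |x - μ| ∂P < eHi - eLo ∧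
    eHi - eLo < (1 - 2 * α) / α * ∫ x, |x - μ| ∂P := by
  obtain ⟨hα₀, hα⟩ := hα
  have hIic := measureReal_Iic_pos_of_strictMono hmono
  have hL := strictMono_lowerPartialMoment hInt hIic
  have hU := strictAnti_upperPartialMoment hInt (measureReal_Ioi_pos_of_strictMono hmono)
  have hLo : eLo < μ :=
    hμ ▸ heLo.lt_integral_s15 hInt hα₀ hα (lowerPartialMoment_pos hInt hIic eLo)
  have hHi : μ < eHi :=
    hμ ▸ heHi.integral_lt_s15 hInt (by linarith) (lowerPartialMoment_pos hInt hIic eHi)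
  have h2α : 0 < 1 - 2 * α := by linarith
  rw [integral_abs_sub_eq_upperPartialMoment_add_lowerPartialMoment hInt, div_mul_eq_mul_div,
    div_mul_eq_mul_div, div_lt_iff₀ (by linarith), lt_div_iff₀ hα₀]
  constructor
  · calc (1 - 2 * α) * (upperPartialMoment P μ + lowerPartialMoment P μ)
        < (1 - 2 * α) * (upperPartialMoment P eLo + lowerPartialMoment P eHi) := by
          gcongr
          exacts [hU hLo, hL hHi]
      _ = (eHi - eLo) * (1 - α) := by rw [← heLo.one_sub_mul_sub_eq heHi hInt, mul_comm]
  · calc (eHi - eLo) * α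
        = (1 - 2 * α) * (lowerPartialMoment P eLo + upperPartialMoment P eHi) := by
          rw [← heLo.mul_sub_eq heHi hInt, mul_comm]
      _ < (1 - 2 * α) * (upperPartialMoment P μ + lowerPartialMoment P μ) := by
          rw [add_comm (upperPartialMoment P μ)]
          gcongr
          exacts [hL hLo, hU hHi]

/-- for a non-degenerate integrable random variable with mean `μ` and
continuous strictly increasing cdf, and `α ∈ (0,1/2)`,
`((1−2α)/(1−α))·E|X−μ| < e_X(1−α) − e_X(α) < ((1−2α)/α)·E|X−μ|`. -/
theorem interexpectile_range_MAD_bounds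
    (P : Measure ℝ) [IsProbabilityMeasure P] (hInt : Integrable id P)
    (hcont : Continuous fun t : ℝ => (P (Iic t)).toReal)
    (hmono : StrictMono fun t : ℝ => (P (Iic t)).toReal)
    (hnd : ∀ c : ℝ, P ≠ Measure.dirac c)
    (μ : ℝ) (hμ : μ = ∫ x, x ∂P)
    (α : ℝ) (hα : α ∈ Ioo (0 : ℝ) (1 / 2))
    (eLo eHi : ℝ) (heLo : IsExpectile P α eLo) (heHi : IsExpectile P (1 - α) eHi) :
    (1 - 2 * α) / (1 - α) * ∫ x, |x - μ| ∂P < eHi - eLo ∧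
    eHi - eLo < (1 - 2 * α) / α * ∫ x, |x - μ| ∂P :=
  interexpectile_range_MAD_bounds_general P hInt hmono μ hμ α hα eLo eHi heLo heHi
end

section
/- Let X̃ = (X−EX)/E|X−EX| and Ỹ = (Y−EY)/E|Y−EY| for non-degenerate integrable X, Y. If ∫_{−∞}^x F_X̃(t) dt ≥ ∫_{−∞}^x F_Ỹ(t) dt for all x ≤ 0 and ∫_x^∞ (1−F_X̃(t)) dt ≤ ∫_x^∞ (1−F_Ỹ(t)) dt for all x ≥ 0, then ∫_{−x}^{x} (F_X̃(t) − F_Ỹ(t)) dt ≤ 0 for all x > 0. -/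
/-!
By Tonelli, `∫_{-∞}^x F = E (x - Z)₊` and `∫_x^∞ (1 - F) = E (Z - x)₊`, so for a centred
`Z` the two integrals differ by exactly `x`. Hence `∫_{-x}^x (F_P - F_Q)` equals
`[∫_x^∞ (1 - F_P) - ∫_x^∞ (1 - F_Q)] - [∫_{-∞}^{-x} F_P - ∫_{-∞}^{-x} F_Q]`,
and the s-order gives both brackets the right sign.
-/

open MeasureTheory Set

theorem lintegral_measure_prodMk_preimage_comm {α β : Type*} [MeasurableSpace α]
    [MeasurableSpace β] (μ : Measure α) (ν : Measure β) [SFinite μ] [SFinite ν]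
    {s : Set (α × β)} (hs : MeasurableSet s) :
    ∫⁻ x, ν (Prod.mk x ⁻¹' s) ∂μ = ∫⁻ y, μ ((fun x => (x, y)) ⁻¹' s) ∂ν := by
  rw [← Measure.prod_apply hs, Measure.prod_apply_symm hs]

section CDF

variable (P : Measure ℝ)

theorem measurable_measure_Iic : Measurable fun t => P (Iic t) :=
  Monotone.measurable fun _ _ h => measure_mono (Iic_subset_Iic.2 h)

theorem measurable_measure_Ioi : Measurable fun t => P (Ioi t) :=
  Antitone.measurable fun _ _ h => measure_mono (Ioi_subset_Ioi h)

theorem lintegral_Iic_measure_Iic [SFinite P] (x : ℝ) :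
    ∫⁻ t in Iic x, P (Iic t) = ∫⁻ z, ENNReal.ofReal (x - z) ∂P := by
  refine (lintegral_measure_prodMk_preimage_comm (volume.restrict (Iic x)) P
    (measurableSet_le measurable_snd measurable_fst)).trans (lintegral_congr fun z => ?_)
  change volume.restrict (Iic x) (Ici z) = _
  rw [Measure.restrict_apply measurableSet_Ici, Ici_inter_Iic, Real.volume_Icc]

theorem lintegral_Ioi_measure_Ioi [SFinite P] (x : ℝ) :
    ∫⁻ t in Ioi x, P (Ioi t) = ∫⁻ z, ENNReal.ofReal (z - x) ∂P := by
  refine (lintegral_measure_prodMk_preimage_comm (volume.restrict (Ioi x)) P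
    (measurableSet_lt measurable_fst measurable_snd)).trans (lintegral_congr fun z => ?_)
  change volume.restrict (Ioi x) (Iio z) = _
  rw [Measure.restrict_apply measurableSet_Iio, Iio_inter_Ioi, Real.volume_Ioo]

theorem integral_Iic_measure_Iic [IsFiniteMeasure P] (x : ℝ) :
    ∫ t in Iic x, (P (Iic t)).toReal = (∫⁻ z, ENNReal.ofReal (x - z) ∂P).toReal := by
  rw [integral_toReal (measurable_measure_Iic P).aemeasurable
    (.of_forall fun _ => measure_lt_top P _), lintegral_Iic_measure_Iic]

theorem integral_Ioi_measure_Ioi [IsFiniteMeasure P] (x : ℝ) :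
    ∫ t in Ioi x, (P (Ioi t)).toReal = (∫⁻ z, ENNReal.ofReal (z - x) ∂P).toReal := by
  rw [integral_toReal (measurable_measure_Ioi P).aemeasurable
    (.of_forall fun _ => measure_lt_top P _), lintegral_Ioi_measure_Ioi]

variable {P}

theorem integrableOn_Iic_measure_Iic [IsFiniteMeasure P] (hP : Integrable id P) (x : ℝ) :
    IntegrableOn (fun t => (P (Iic t)).toReal) (Iic x) := by
  refine integrable_toReal_of_lintegral_ne_top (measurable_measure_Iic P).aemeasurable ?_
  rw [lintegral_Iic_measure_Iic]
  exact ((integrable_const x).sub hP).lintegral_lt_top.ne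

theorem integral_Iic_cdf_eq_integral_Ioi_one_sub_cdf [IsProbabilityMeasure P]
    (hP : Integrable id P) (x : ℝ) :
    ∫ t in Iic x, (P (Iic t)).toReal
      = (∫ t in Ioi x, (1 - (P (Iic t)).toReal)) + (x - ∫ z, z ∂P) := by
  have hcompl (t : ℝ) : 1 - (P (Iic t)).toReal = (P (Ioi t)).toReal := by
    rw [← compl_Iic, ← measureReal_def, ← measureReal_def,
      probReal_compl_eq_one_sub measurableSet_Iic]
  have hid : Integrable (fun z => z) P := hP
  have hmean : ∫ z, (x - z) ∂P = x - ∫ z, z ∂P := by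
    rw [integral_sub (integrable_const x) hid, integral_const, probReal_univ, one_smul]
  have hparts : ∫ z, (x - z) ∂P = (∫⁻ z, ENNReal.ofReal (x - z) ∂P).toReal
      - (∫⁻ z, ENNReal.ofReal (z - x) ∂P).toReal := by
    have hint : Integrable (fun z => x - z) P := (integrable_const x).sub hid
    simpa only [neg_sub] using integral_eq_lintegral_pos_part_sub_lintegral_neg_part hint
  simp_rw [hcompl]
  rw [integral_Iic_measure_Iic, integral_Ioi_measure_Ioi, ← hmean, hparts]
  ring

end CDF

theorem s_order_implies_sf_order_general
    (P Q : Measure ℝ) [IsProbabilityMeasure P] [IsProbabilityMeasure Q]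
    (hIP : Integrable id P) (hIQ : Integrable id Q)
    (hmP : ∫ x, x ∂P = 0) (hmQ : ∫ x, x ∂Q = 0)
    (FP FQ : ℝ → ℝ)
    (hFP : ∀ t, FP t = (P (Iic t)).toReal) (hFQ : ∀ t, FQ t = (Q (Iic t)).toReal)
    (hneg : ∀ x : ℝ, x ≤ 0 → ∫ t in Iic x, FQ t ≤ ∫ t in Iic x, FP t)
    (hpos : ∀ x : ℝ, 0 ≤ x → ∫ t in Ioi x, (1 - FP t) ≤ ∫ t in Ioi x, (1 - FQ t)) :
    ∀ x : ℝ, 0 < x → ∫ t in (-x)..x, (FP t - FQ t) ≤ 0 := by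
  intro x hx
  obtain rfl : FP = fun t => (P (Iic t)).toReal := funext hFP
  obtain rfl : FQ = fun t => (Q (Iic t)).toReal := funext hFQ
  beta_reduce at hneg hpos ⊢
  have hP := integrableOn_Iic_measure_Iic hIP
  have hQ := integrableOn_Iic_measure_Iic hIQ
  rw [← intervalIntegral.integral_Iic_sub_Iic
      (f := fun t => (P (Iic t)).toReal - (Q (Iic t)).toReal)
      ((hP (-x)).sub (hQ (-x))) ((hP x).sub (hQ x)),
    integral_sub (hP x) (hQ x), integral_sub (hP (-x)) (hQ (-x)),
    integral_Iic_cdf_eq_integral_Ioi_one_sub_cdf hIP x,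
    integral_Iic_cdf_eq_integral_Ioi_one_sub_cdf hIQ x, hmP, hmQ]
  linarith [hpos x hx.le, hneg (-x) (by linarith)]

/-- for standardized distributions (mean `0`, mean absolute value `1`),
if `∫_{−∞}^x F_X̃ ≥ ∫_{−∞}^x F_Ỹ` for all `x ≤ 0` and
`∫_x^∞ (1−F_X̃) ≤ ∫_x^∞ (1−F_Ỹ)` for all `x ≥ 0` (the s-order), then
`∫_{−x}^{x} (F_X̃ − F_Ỹ) ≤ 0` for all `x > 0` (the ≤_sf order). -/
theorem s_order_implies_sf_order
    (P Q : Measure ℝ) [IsProbabilityMeasure P] [IsProbabilityMeasure Q]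
    (hIP : Integrable id P) (hIQ : Integrable id Q)
    (hmP : ∫ x, x ∂P = 0) (hmQ : ∫ x, x ∂Q = 0)
    (hdP : ∫ x, |x| ∂P = 1) (hdQ : ∫ x, |x| ∂Q = 1)
    (FP FQ : ℝ → ℝ)
    (hFP : ∀ t, FP t = (P (Iic t)).toReal) (hFQ : ∀ t, FQ t = (Q (Iic t)).toReal)
    (hneg : ∀ x : ℝ, x ≤ 0 → ∫ t in Iic x, FQ t ≤ ∫ t in Iic x, FP t)
    (hpos : ∀ x : ℝ, 0 ≤ x → ∫ t in Ioi x, (1 - FP t) ≤ ∫ t in Ioi x, (1 - FQ t)) :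
    ∀ x : ℝ, 0 < x → ∫ t in (-x)..x, (FP t - FQ t) ≤ 0 :=
  s_order_implies_sf_order_general P Q hIP hIQ hmP hmQ FP FQ hFP hFQ hneg hpos
end
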